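/- arXiv:1704.06807 — 9 statements merged into one kernel-verified Lean document; each statement's English description precedes it below -/
import Mathlib

section
/- Let 𝒜 be a finite nonempty set, p ≥ 2 an integer, and φ, δ ∈ (0,1) real numbers. If A ⊆ 𝒜^p is φ-average-thick, then there is a subset A' ⊆ A with |A'| ≥ (1 − δ)·|A| such that A' is (δφ/p)-thick. -/
open Finset

/-- Insert the value `s` at coordinate `i` into the partial tuple `a'`. -/
def insNe {𝒜 : Type*} {ι : Type*} [DecidableEq ι]
    (i : ι) (a' : {j : ι // j ≠ i} → 𝒜) (s : 𝒜) : ι → 𝒜 :=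
  fun j => if h : j = i then s else a' ⟨j, h⟩

/-- Projection of `A ⊆ 𝒜^ι` onto the coordinates other than `i`. -/
def projNe {𝒜 : Type*} {ι : Type*} [DecidableEq ι] [Fintype ι] [DecidableEq 𝒜]
    (A : Finset (ι → 𝒜)) (i : ι) : Finset ({j : ι // j ≠ i} → 𝒜) :=
  A.image fun a => fun j => a j.1

/-- The set of extensions of `a'` at coordinate `i`:  those `s ∈ 𝒜` such that
inserting `s` at coordinate `i` into `a'` gives an element of `A`. -/
def extNe {𝒜 : Type*} {ι : Type*} [DecidableEq ι] [Fintype ι] [Fintype 𝒜] [DecidableEq 𝒜]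
    (A : Finset (ι → 𝒜)) (i : ι) (a' : {j : ι // j ≠ i} → 𝒜) : Finset 𝒜 :=
  Finset.univ.filter fun s => insNe i a' s ∈ A

/-- `A` is `τ`-thick: every element of the projection of `A` away from any
coordinate `i` has at least `τ·|𝒜|` extensions at coordinate `i`. -/
def Thick {𝒜 : Type*} {ι : Type*} [DecidableEq ι] [Fintype ι] [Fintype 𝒜] [DecidableEq 𝒜]
    (τ : ℝ) (A : Finset (ι → 𝒜)) : Prop :=
  ∀ (i : ι) (a' : {j : ι // j ≠ i} → 𝒜), a' ∈ projNe A i →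
    τ * (Fintype.card 𝒜 : ℝ) ≤ ((extNe A i a').card : ℝ)

lemma clean_aux {𝒜 : Type*} {ι : Type*} [DecidableEq ι] [Fintype ι] [Fintype 𝒜]
    [DecidableEq 𝒜] {τ : ℝ} (hτ : 0 ≤ τ * (Fintype.card 𝒜 : ℝ)) (B : Finset (ι → 𝒜)) :
    ∃ A', A' ⊆ B ∧ Thick τ A' ∧
      (B.card : ℝ) ≤ (A'.card : ℝ) + τ * (Fintype.card 𝒜 : ℝ) *
        ∑ i, (((projNe B i).card : ℝ) - ((projNe A' i).card : ℝ)) := by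
  induction B using Finset.strongInductionOn with
  | _ B ih =>
  by_cases hth : Thick τ B
  · exact ⟨B, subset_rfl, hth, by simp⟩
  · simp only [Thick, not_forall, not_le] at hth
    obtain ⟨i, a', ha', hlt⟩ := hth
    set B' := B.filter (fun b => ¬ ((fun j : {j : ι // j ≠ i} => b j.1) = a')) with hB'
    have hsub : B' ⊆ B := filter_subset _ _
    obtain ⟨b0, hb0, hb0p⟩ : ∃ b ∈ B, (fun j : {j : ι // j ≠ i} => b j.1) = a' := by
      simpa [projNe, mem_image] using ha'
    have hssub : B' ⊂ B := by
      refine ⟨hsub, fun hBB' => ?_⟩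
      have := hBB' hb0
      simp [hB', hb0p] at this
    -- the fiber over a' is in bijection with the extension set
    have hfiber : (B.filter (fun b => (fun j : {j : ι // j ≠ i} => b j.1) = a')).card
        = (extNe B i a').card := by
      apply Finset.card_bij (fun b _ => b i)
      · intro b hb
        rw [mem_filter] at hb
        have : insNe i a' (b i) = b := by
          funext j
          unfold insNe
          split
          · subst_vars; rfl
          · rw [← hb.2]
        simp [extNe, this, hb.1]
      · intro b1 hb1 b2 hb2 hEq
        rw [mem_filter] at hb1 hb2
        funext j
        by_cases hj : j = i
        · subst hj; exact hEq
        · have h1 := congrFun hb1.2 ⟨j, hj⟩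
          have h2 := congrFun hb2.2 ⟨j, hj⟩
          simp only at h1 h2
          rw [h1, h2]
      · intro s hs
        simp only [extNe, mem_filter, mem_univ, true_and] at hs
        refine ⟨insNe i a' s, ?_, ?_⟩
        · rw [mem_filter]
          refine ⟨hs, ?_⟩
          funext j
          simp [insNe, j.2]
        · simp [insNe]
    have hcards : (B.filter (fun b => (fun j : {j : ι // j ≠ i} => b j.1) = a')).card
        + B'.card = B.card := Finset.card_filter_add_card_filter_not _
    -- projection at i drops
    have hproji : projNe B' i ⊆ (projNe B i).erase a' := by
      intro x hx
      obtain ⟨b, hb, rfl⟩ := mem_image.mp hx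
      rw [hB', mem_filter] at hb
      exact mem_erase.mpr ⟨hb.2, mem_image_of_mem _ hb.1⟩
    have hproji' : (projNe B' i).card + 1 ≤ (projNe B i).card := by
      have h1 : (projNe B' i).card ≤ ((projNe B i).erase a').card := card_le_card hproji
      have h2 : ((projNe B i).erase a').card = (projNe B i).card - 1 :=
        card_erase_of_mem ha'
      have h3 : 1 ≤ (projNe B i).card := card_pos.mpr ⟨a', ha'⟩
      exact Nat.add_le_of_le_sub h3 (h2 ▸ h1)
    have hprojmono : ∀ j, projNe B' j ⊆ projNe B j := fun j => image_subset_image hsub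
    -- sum of projections drops by at least 1
    have hS : (∑ j, ((projNe B' j).card : ℝ)) + 1 ≤ ∑ j, ((projNe B j).card : ℝ) := by
      rw [← Finset.sum_erase_add univ _ (mem_univ i),
        ← Finset.sum_erase_add univ (fun j => ((projNe B j).card : ℝ)) (mem_univ i)]
      have h1 : ∑ j ∈ univ.erase i, ((projNe B' j).card : ℝ)
          ≤ ∑ j ∈ univ.erase i, ((projNe B j).card : ℝ) :=
        Finset.sum_le_sum fun j _ => Nat.cast_le.mpr (card_le_card (hprojmono j))
      have h2 : ((projNe B' i).card : ℝ) + 1 ≤ ((projNe B i).card : ℝ) := by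
        exact_mod_cast hproji'
      linarith
    obtain ⟨A', hA'B', hthick, hbound⟩ := ih B' hssub
    refine ⟨A', hA'B'.trans hsub, hthick, ?_⟩
    have hBcard : (B.card : ℝ) = ((extNe B i a').card : ℝ) + (B'.card : ℝ) := by
      rw [← hfiber]; exact_mod_cast hcards.symm
    rw [Finset.sum_sub_distrib] at hbound ⊢
    have hmul : τ * (Fintype.card 𝒜 : ℝ) * ((∑ j, ((projNe B' j).card : ℝ))
          - ∑ j, ((projNe A' j).card : ℝ))
        ≤ τ * (Fintype.card 𝒜 : ℝ) * ((∑ j, ((projNe B j).card : ℝ)) - 1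
          - ∑ j, ((projNe A' j).card : ℝ)) := by
      apply mul_le_mul_of_nonneg_left _ hτ
      linarith
    have he : ((extNe B i a').card : ℝ) ≤ τ * (Fintype.card 𝒜 : ℝ) := le_of_lt hlt
    linarith

/-- if `A ⊆ 𝒜^p` is `φ`-average-thick, then there is `A' ⊆ A`
with `|A'| ≥ (1 − δ)|A|` which is `(δφ/p)`-thick. -/
theorem averageThick_exists_thick_subset
    {𝒜 : Type*} [Fintype 𝒜] [DecidableEq 𝒜] [Nonempty 𝒜]
    {p : ℕ} (hp : 2 ≤ p) {φ δ : ℝ}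
    (hφ0 : 0 < φ) (hφ1 : φ < 1) (hδ0 : 0 < δ) (hδ1 : δ < 1)
    (A : Finset (Fin p → 𝒜))
    (havg : ∀ i : Fin p,
      φ * (Fintype.card 𝒜 : ℝ) ≤ (A.card : ℝ) / ((projNe A i).card : ℝ)) :
    ∃ A' ⊆ A, (1 - δ) * (A.card : ℝ) ≤ (A'.card : ℝ) ∧ Thick (δ * φ / p) A' := by
  have hC : 0 < (Fintype.card 𝒜 : ℝ) := by
    exact_mod_cast Fintype.card_pos
  have hp0 : 0 < (p : ℝ) := by
    have : 0 < p := by omega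
    exact_mod_cast this
  have hτ : 0 ≤ (δ * φ / p) * (Fintype.card 𝒜 : ℝ) := by positivity
  obtain ⟨A', hsub, hthick, hbd⟩ := clean_aux hτ A
  refine ⟨A', hsub, ?_, hthick⟩
  -- bound each projection
  have hproj : ∀ i : Fin p, ((projNe A i).card : ℝ) ≤ (A.card : ℝ) / (φ * Fintype.card 𝒜) := by
    intro i
    have hpos : 0 < ((projNe A i).card : ℝ) := by
      rcases Nat.eq_zero_or_pos (projNe A i).card with h | h
      · exfalso
        have := havg i
        rw [h] at this
        simp at this
        nlinarith
      · exact_mod_cast h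
    have h1 : φ * (Fintype.card 𝒜 : ℝ) * ((projNe A i).card : ℝ) ≤ (A.card : ℝ) := by
      have := havg i
      rw [le_div_iff₀ hpos] at this
      linarith
    rw [le_div_iff₀ (by positivity)]
    nlinarith
  have hsum : ∑ i : Fin p, (((projNe A i).card : ℝ) - ((projNe A' i).card : ℝ))
      ≤ (p : ℝ) * ((A.card : ℝ) / (φ * Fintype.card 𝒜)) := by
    calc ∑ i : Fin p, (((projNe A i).card : ℝ) - ((projNe A' i).card : ℝ))
        ≤ ∑ i : Fin p, ((A.card : ℝ) / (φ * Fintype.card 𝒜)) := by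
          apply Finset.sum_le_sum
          intro i _
          have h0 : (0:ℝ) ≤ ((projNe A' i).card : ℝ) := by positivity
          linarith [hproj i]
      _ = (p : ℝ) * ((A.card : ℝ) / (φ * Fintype.card 𝒜)) := by
          rw [Finset.sum_const, card_univ, Fintype.card_fin, nsmul_eq_mul]
  have hkey : (δ * φ / p) * (Fintype.card 𝒜 : ℝ) *
      ((p : ℝ) * ((A.card : ℝ) / (φ * Fintype.card 𝒜))) = δ * A.card := by
    field_simp
  have h2 : (δ * φ / p) * (Fintype.card 𝒜 : ℝ) *
      (∑ i : Fin p, (((projNe A i).card : ℝ) - ((projNe A' i).card : ℝ)))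
      ≤ δ * A.card := by
    rw [← hkey]
    exact mul_le_mul_of_nonneg_left hsum hτ
  linarith
end

section
/- Let 𝒜 be a finite nonempty set, p ≥ 2 an integer, i ∈ {1,…,p}, τ ∈ (0,1), A ⊆ 𝒜^p a τ-thick set, and S ⊆ 𝒜. Then the set A^{i,S}_{≠i} (the projection onto the coordinates other than i of {a ∈ A : a_i ∈ S}) is τ-thick as a subset of 𝒜^{p−1}, and A^{i,S}_{≠i} is empty if and only if S ∩ A_i is empty, where A_i is the projection of A onto coordinate i. -/
open Finset

/-- if `A ⊆ 𝒜^p` is `τ`-thick and `S ⊆ 𝒜`, then the projection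
away from coordinate `i` of `A^{i,S} = {a ∈ A : a_i ∈ S}` is `τ`-thick, and it
is empty iff `S ∩ A_i` is empty. -/
theorem restrict_project_thick
    {𝒜 : Type*} [Fintype 𝒜] [DecidableEq 𝒜] [Nonempty 𝒜]
    {p : ℕ} (hp : 2 ≤ p) (i : Fin p) {τ : ℝ} (hτ0 : 0 < τ) (hτ1 : τ < 1)
    (A : Finset (Fin p → 𝒜)) (hA : Thick τ A) (S : Finset 𝒜) :
    Thick τ (projNe (A.filter fun a => a i ∈ S) i) ∧
      (projNe (A.filter fun a => a i ∈ S) i = ∅ ↔ S ∩ A.image (fun a => a i) = ∅) := by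
  classical
  constructor
  · intro k a'' ha''
    simp only [projNe, mem_image] at ha''
    obtain ⟨b, hb, rfl⟩ := ha''
    obtain ⟨a, ha, rfl⟩ := hb
    have haA : a ∈ A := (mem_filter.mp ha).1
    have haS : a i ∈ S := (mem_filter.mp ha).2
    have ha' : (fun j : {j : Fin p // j ≠ k.1} => a j.1) ∈ projNe A k.1 :=
      mem_image.mpr ⟨a, haA, rfl⟩
    refine (hA k.1 _ ha').trans ?_
    norm_cast
    apply Finset.card_le_card
    intro s hs
    simp only [extNe, mem_filter, mem_univ, true_and] at hs ⊢
    refine mem_image.mpr ⟨insNe k.1 (fun j => a j.1) s, ?_, ?_⟩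
    · refine mem_filter.mpr ⟨hs, ?_⟩
      have hik : ¬ (i = k.1) := fun h => k.2 h.symm
      simpa [insNe, hik] using haS
    · funext j
      by_cases hjk : j = k
      · have : j.1 = k.1 := congrArg Subtype.val hjk
        simp [insNe, this, hjk]
      · have : ¬ (j.1 = k.1) := fun h => hjk (Subtype.ext h)
        simp [insNe, this, hjk]
  · constructor
    · intro h
      rw [Finset.eq_empty_iff_forall_notMem] at h ⊢
      intro s hs
      obtain ⟨hsS, hsA⟩ := mem_inter.mp hs
      obtain ⟨a, haA, hai⟩ := mem_image.mp hsA
      exact h _ (mem_image.mpr ⟨a, mem_filter.mpr ⟨haA, hai ▸ hsS⟩, rfl⟩)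
    · intro h
      rw [Finset.eq_empty_iff_forall_notMem] at h ⊢
      intro b hb
      obtain ⟨a, ha, rfl⟩ := mem_image.mp hb
      obtain ⟨haA, haS⟩ := mem_filter.mp ha
      exact h (a i) (mem_inter.mpr ⟨haS, mem_image.mpr ⟨a, haA, rfl⟩⟩)
end

section
/- Let h ≥ 1 and p ≥ 2 be integers, i ∈ {1,…,p}, and δ, τ, φ ∈ (0,1) real numbers with τ ≥ 2^{−h}. Let 𝒜, ℬ be finite nonempty sets and g : 𝒜 × ℬ → {0,1} a function which has (δ,h)-hitting monochromatic rectangle-distributions. Suppose A ⊆ 𝒜^p and B ⊆ ℬ^p are nonempty, A and B are each τ-thick, and |A|/|A_{≠i}| ≤ φ·|𝒜|. Then for each c ∈ {0,1} there exist U ⊆ 𝒜 and V ⊆ ℬ such that g(u,v) = c for all (u,v) ∈ U × V, and: (1) A^{i,U}_{≠i} and B^{i,V}_{≠i} are each τ-thick; (2) |A^{i,U}_{≠i}|/|𝒜|^{p−1} ≥ (1/φ)·(1 − 3δ)·|A|/|𝒜|^p; (3) |B^{i,V}_{≠i}|/|ℬ|^{p−1} ≥ (1 − 3δ)·|B|/|ℬ|^p.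 -/
/-!
For each `a' ∈ A_{≠i}` the extension set `Ext_A^i(a')` has density at least `τ ≥ 2^{-h}`, and the
same holds for `B`; so a rectangle `U × V` drawn from the `c`-monochromatic hitting distribution
meets `Ext_A^i(a')` with probability at least `1 - δ` (paired with any one large extension set of
`B`), and symmetrically for `B`. Averaging, some rectangle in the support has `U` meeting the
extension sets of a `(1 - 2δ)`-fraction of `A_{≠i}` and `V` those of a `(1 - 2δ)`-fraction of
`B_{≠i}`. These are exactly `A^{i,U}_{≠i}` and `B^{i,V}_{≠i}`, and the degree bound
`|A| ≤ φ |𝒜| |A_{≠i}|` (resp. the trivial `|B| ≤ |ℬ| |B_{≠i}|`) turns the counts into densities.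
-/

open Finset

/-- A probability distribution over (combinatorial) rectangles `U × V` with
`U ⊆ α` and `V ⊆ β`. -/
structure RectDist (α β : Type*) [Fintype α] [Fintype β] where
  prob : Finset α × Finset β → ℝ
  nonneg : ∀ R, 0 ≤ prob R
  sum_one : ∑ R, prob R = 1

open Classical in
/-- The probability, under `σ`, that a sampled rectangle satisfies `P`. -/
noncomputable def rectProb {α β : Type*} [Fintype α] [Fintype β]
    (σ : RectDist α β) (P : Finset α × Finset β → Prop) : ℝ :=
  ∑ R, if P R then σ.prob R else 0

/-- `σ` is a `(δ, h)`-hitting rectangle-distribution: every rectangle `A × B`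
with `|A| ≥ 2^{-h}|α|` and `|B| ≥ 2^{-h}|β|` is hit with probability `≥ 1 - δ`. -/
def IsHitting {α β : Type*} [Fintype α] [Fintype β] [DecidableEq α] [DecidableEq β]
    (σ : RectDist α β) (δ : ℝ) (h : ℕ) : Prop :=
  ∀ (A : Finset α) (B : Finset β),
    (2:ℝ)^(-(h:ℝ)) * (Fintype.card α : ℝ) ≤ (A.card : ℝ) →
    (2:ℝ)^(-(h:ℝ)) * (Fintype.card β : ℝ) ≤ (B.card : ℝ) →
    1 - δ ≤ rectProb σ (fun R => ((R.1 ×ˢ R.2) ∩ (A ×ˢ B)).Nonempty)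

/-- `g` has `(δ, h)`-hitting monochromatic rectangle-distributions: for each
`c ∈ {0,1}` there is a `(δ,h)`-hitting distribution supported on
`c`-monochromatic rectangles of `g`. -/
def HasHittingMonoDists {α β : Type*} [Fintype α] [Fintype β] [DecidableEq α] [DecidableEq β]
    (g : α → β → Bool) (δ : ℝ) (h : ℕ) : Prop :=
  ∀ c : Bool, ∃ σ : RectDist α β, IsHitting σ δ h ∧
    ∀ R, σ.prob R ≠ 0 → ∀ u ∈ R.1, ∀ v ∈ R.2, g u v = c

section Projection

variable {𝒜 ι : Type*} [DecidableEq ι]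

lemma insNe_restrict_self (i : ι) (a : ι → 𝒜) : insNe i (fun j => a j.1) (a i) = a := by
  funext j
  by_cases hj : j = i
  · subst hj; simp [insNe]
  · simp [insNe, hj]

lemma restrict_insNe (i : ι) (a' : {j : ι // j ≠ i} → 𝒜) (s : 𝒜) :
    (fun j : {j : ι // j ≠ i} => insNe i a' s j.1) = a' := by
  funext j
  simp [insNe, j.2]

variable [Fintype ι] [Fintype 𝒜] [DecidableEq 𝒜]

lemma Thick.mono {τ τ' : ℝ} {A : Finset (ι → 𝒜)} (hA : Thick τ A) (hτ : τ' ≤ τ) : Thick τ' A :=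
  fun i a' ha' => (mul_le_mul_of_nonneg_right hτ (Nat.cast_nonneg _)).trans (hA i a' ha')

lemma mem_extNe {A : Finset (ι → 𝒜)} {i : ι} {a' : {j : ι // j ≠ i} → 𝒜} {s : 𝒜} :
    s ∈ extNe A i a' ↔ insNe i a' s ∈ A := by
  simp [extNe]

lemma projNe_filter_mem (A : Finset (ι → 𝒜)) (i : ι) (U : Finset 𝒜) :
    projNe (A.filter fun a => a i ∈ U) i
      = (projNe A i).filter fun a' => (U ∩ extNe A i a').Nonempty := by
  ext a'
  simp only [projNe, mem_image, mem_filter]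
  constructor
  · rintro ⟨a, ⟨ha, haU⟩, rfl⟩
    exact ⟨⟨a, ha, rfl⟩, a i, mem_inter.mpr ⟨haU, mem_extNe.mpr (by rwa [insNe_restrict_self])⟩⟩
  · rintro ⟨⟨a, -, rfl⟩, s, hs⟩
    obtain ⟨hsU, hsA⟩ := mem_inter.mp hs
    exact ⟨_, ⟨mem_extNe.mp hsA, by simpa [insNe] using hsU⟩, restrict_insNe i _ s⟩

/-- Freezing coordinate `i` commutes with inserting at any other coordinate `j`, so every
extension of an element of `A` at `j` survives in the projection. -/
lemma Thick.projNe_filter {τ : ℝ} {A : Finset (ι → 𝒜)} (hA : Thick τ A) (i : ι)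
    (U : Finset 𝒜) : Thick τ (projNe (A.filter fun a => a i ∈ U) i) := by
  intro j a'' ha''
  simp only [projNe, mem_image, mem_filter] at ha''
  obtain ⟨-, ⟨a, ⟨ha, haU⟩, rfl⟩, rfl⟩ := ha''
  have hij : (i : ι) ≠ j.1 := Ne.symm j.2
  have hsub : extNe A j.1 (fun m => a m.1)
      ⊆ extNe (projNe (A.filter fun a => a i ∈ U) i) j (fun k => a k.1.1) := by
    intro s hs
    have hcomm : (fun k : {k : ι // k ≠ i} => insNe j.1 (fun m => a m.1) s k.1)
        = insNe j (fun k => a k.1.1) s := by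
      funext k
      by_cases hk : k = j
      · subst hk; simp [insNe]
      · have hk' : k.1 ≠ j.1 := fun h => hk (Subtype.ext h)
        simp [insNe, hk, hk']
    rw [mem_extNe, ← hcomm]
    refine mem_image_of_mem _ (mem_filter.mpr ⟨mem_extNe.mp hs, ?_⟩)
    simpa [insNe, hij] using haU
  calc τ * (Fintype.card 𝒜 : ℝ) ≤ (extNe A j.1 (fun m => a m.1)).card :=
        hA j.1 _ (mem_image_of_mem _ ha)
    _ ≤ _ := by exact_mod_cast card_le_card hsub

lemma card_le_card_projNe_mul (A : Finset (ι → 𝒜)) (i : ι) :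
    A.card ≤ (projNe A i).card * Fintype.card 𝒜 := by
  rw [← card_univ, ← card_product]
  refine card_le_card_of_injOn (fun a => ((fun j : {j : ι // j ≠ i} => a j.1), a i)) ?_ ?_
  · intro a ha
    simpa [projNe] using ⟨a, ha, rfl⟩
  · intro a₁ _ a₂ _ heq
    rw [← insNe_restrict_self i a₁, ← insNe_restrict_self i a₂]
    simp only [Prod.mk.injEq] at heq
    rw [heq.1, heq.2]

end Projection

section Hitting

variable {α β : Type*} [Fintype α] [Fintype β]

lemma rectProb_mono (σ : RectDist α β) {P Q : Finset α × Finset β → Prop}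
    (h : ∀ R, P R → Q R) : rectProb σ P ≤ rectProb σ Q := by
  unfold rectProb
  refine sum_le_sum fun R _ => ?_
  by_cases hP : P R
  · simp [hP, h R hP]
  · simp only [hP, if_false]
    split_ifs
    exacts [σ.nonneg R, le_rfl]

lemma sum_rectProb_eq_sum_mul_card {γ : Type*} (σ : RectDist α β) (s : Finset γ)
    (P : γ → Finset α × Finset β → Prop) [∀ x R, Decidable (P x R)] :
    ∑ x ∈ s, rectProb σ (P x) = ∑ R, σ.prob R * (s.filter fun x => P x R).card := by
  unfold rectProb
  rw [sum_comm]
  refine sum_congr rfl fun R _ => ?_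
  rw [card_filter, Nat.cast_sum, mul_sum]
  refine sum_congr rfl fun x _ => ?_
  split_ifs <;> simp

lemma RectDist.exists_prob_ne_zero_le (σ : RectDist α β) {F : Finset α × Finset β → ℝ} {c : ℝ}
    (h : c ≤ ∑ R, σ.prob R * F R) : ∃ R, σ.prob R ≠ 0 ∧ c ≤ F R := by
  classical
  set S := univ.filter fun R => σ.prob R ≠ 0
  have hS : S.Nonempty := by
    obtain ⟨R, -, hR⟩ := exists_ne_zero_of_sum_ne_zero (σ.sum_one.symm ▸ one_ne_zero)
    exact ⟨R, mem_filter.mpr ⟨mem_univ R, hR⟩⟩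
  have hsum : ∀ f : Finset α × Finset β → ℝ, ∑ R ∈ S, σ.prob R * f R = ∑ R, σ.prob R * f R :=
    fun f => sum_filter_of_ne fun R _ hR => left_ne_zero_of_mul hR
  have hle : ∑ R ∈ S, σ.prob R * c ≤ ∑ R ∈ S, σ.prob R * F R := by
    rw [hsum, hsum, ← sum_mul, σ.sum_one, one_mul]
    exact h
  obtain ⟨R, hRS, hR⟩ := exists_le_of_sum_le hS hle
  have hR0 : σ.prob R ≠ 0 := (mem_filter.mp hRS).2
  exact ⟨R, hR0, le_of_mul_le_mul_left hR ((σ.nonneg R).lt_of_ne' hR0)⟩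

lemma mul_card_le_sum_mul_card_filter {γ : Type*} (σ : RectDist α β) {S : Finset γ}
    {P : γ → Finset α × Finset β → Prop} [∀ x R, Decidable (P x R)] {t : ℝ}
    (hP : ∀ x ∈ S, t ≤ rectProb σ (P x)) :
    t * S.card ≤ ∑ R, σ.prob R * (S.filter fun x => P x R).card := by
  rw [← sum_rectProb_eq_sum_mul_card, mul_comm, ← nsmul_eq_mul, ← sum_const]
  exact sum_le_sum hP

variable [DecidableEq α] [DecidableEq β] {σ : RectDist α β} {δ : ℝ} {h : ℕ}

lemma IsHitting.one_sub_le_rectProb_fst (hσ : IsHitting σ δ h) {A : Finset α} {B : Finset β}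
    (hA : (2:ℝ)^(-(h:ℝ)) * Fintype.card α ≤ A.card)
    (hB : (2:ℝ)^(-(h:ℝ)) * Fintype.card β ≤ B.card) :
    1 - δ ≤ rectProb σ fun R => (R.1 ∩ A).Nonempty := by
  refine (hσ A B hA hB).trans (rectProb_mono σ ?_)
  rintro R ⟨⟨u, v⟩, hm⟩
  simp only [mem_inter, mem_product] at hm
  exact ⟨u, mem_inter.mpr ⟨hm.1.1, hm.2.1⟩⟩

lemma IsHitting.one_sub_le_rectProb_snd (hσ : IsHitting σ δ h) {A : Finset α} {B : Finset β}
    (hA : (2:ℝ)^(-(h:ℝ)) * Fintype.card α ≤ A.card)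
    (hB : (2:ℝ)^(-(h:ℝ)) * Fintype.card β ≤ B.card) :
    1 - δ ≤ rectProb σ fun R => (R.2 ∩ B).Nonempty := by
  refine (hσ A B hA hB).trans (rectProb_mono σ ?_)
  rintro R ⟨⟨u, v⟩, hm⟩
  simp only [mem_inter, mem_product] at hm
  exact ⟨v, mem_inter.mpr ⟨hm.1.2, hm.2.2⟩⟩

/-- Adding the hit fractions of the two families, the expected total is at least `2 - 2δ`;
a rectangle in the support attaining the expectation must hit a `(1 - 2δ)`-fraction of each,
since neither fraction exceeds `1`. -/
lemma IsHitting.exists_rect_hits_most {γ γ' : Type*} (hσ : IsHitting σ δ h)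
    {S : Finset γ} {S' : Finset γ'} (hS : S.Nonempty) (hS' : S'.Nonempty)
    {E : γ → Finset α} {E' : γ' → Finset β}
    (hE : ∀ x ∈ S, (2:ℝ)^(-(h:ℝ)) * Fintype.card α ≤ (E x).card)
    (hE' : ∀ y ∈ S', (2:ℝ)^(-(h:ℝ)) * Fintype.card β ≤ (E' y).card) :
    ∃ R, σ.prob R ≠ 0 ∧
      (1 - 2 * δ) * S.card ≤ (S.filter fun x => (R.1 ∩ E x).Nonempty).card ∧
      (1 - 2 * δ) * S'.card ≤ (S'.filter fun y => (R.2 ∩ E' y).Nonempty).card := by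
  classical
  obtain ⟨x₀, hx₀⟩ := hS
  obtain ⟨y₀, hy₀⟩ := hS'
  have hcard : (0 : ℝ) < S.card := by exact_mod_cast card_pos.mpr ⟨x₀, hx₀⟩
  have hcard' : (0 : ℝ) < S'.card := by exact_mod_cast card_pos.mpr ⟨y₀, hy₀⟩
  set N := fun R : Finset α × Finset β => ((S.filter fun x => (R.1 ∩ E x).Nonempty).card : ℝ)
  set N' := fun R : Finset α × Finset β => ((S'.filter fun y => (R.2 ∩ E' y).Nonempty).card : ℝ)
  have hfst : (1 - δ) * S.card ≤ ∑ R, σ.prob R * N R :=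
    mul_card_le_sum_mul_card_filter σ fun x hx => hσ.one_sub_le_rectProb_fst (hE x hx) (hE' y₀ hy₀)
  have hsnd : (1 - δ) * S'.card ≤ ∑ R, σ.prob R * N' R :=
    mul_card_le_sum_mul_card_filter σ fun y hy => hσ.one_sub_le_rectProb_snd (hE x₀ hx₀) (hE' y hy)
  have hexp : 2 - 2 * δ ≤ ∑ R, σ.prob R * (N R / S.card + N' R / S'.card) := by
    simp only [mul_add, sum_add_distrib, ← mul_div_assoc, ← sum_div]
    linarith [(le_div_iff₀ hcard).mpr hfst, (le_div_iff₀ hcard').mpr hsnd]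
  obtain ⟨R, hR, hRexp⟩ := σ.exists_prob_ne_zero_le hexp
  have hN : N R ≤ S.card := Nat.cast_le.mpr (card_filter_le _ _)
  have hN' : N' R ≤ S'.card := Nat.cast_le.mpr (card_filter_le _ _)
  have hfrac : N R / S.card ≤ 1 := (div_le_one hcard).mpr hN
  have hfrac' : N' R / S'.card ≤ 1 := (div_le_one hcard').mpr hN'
  refine ⟨R, hR, ?_, ?_⟩
  · rw [← le_div_iff₀ hcard]; linarith
  · rw [← le_div_iff₀ hcard']; linarith

end Hitting

lemma mul_le_mul_of_mul_le_of_le_mul {t a a' n K : ℝ} (hn : t * a' ≤ n) (hn0 : 0 ≤ n)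
    (ha : a ≤ K * a') (ha0 : 0 ≤ a) (hK : 0 ≤ K) : t * a ≤ K * n := by
  rcases le_or_gt 0 t with ht | ht
  · calc t * a ≤ t * (K * a') := mul_le_mul_of_nonneg_left ha ht
      _ = K * (t * a') := by ring
      _ ≤ K * n := mul_le_mul_of_nonneg_left hn hK
  · nlinarith

lemma mul_div_pow_le_div_pow_pred {t x q n : ℝ} {p : ℕ} (hp : 0 < p) (hq : 0 < q)
    (h : t * x ≤ q * n) : t * (x / q ^ p) ≤ n / q ^ (p - 1) := by
  have hpow : q ^ p = q ^ (p - 1) * q := by rw [← pow_succ, Nat.sub_add_cancel hp]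
  rw [hpow, ← mul_div_assoc, div_le_div_iff₀ (by positivity) (by positivity)]
  nlinarith [pow_pos hq (p - 1)]

theorem projection_lemma_general
    {𝒜 ℬ : Type*} [Fintype 𝒜] [DecidableEq 𝒜] [Nonempty 𝒜]
    [Fintype ℬ] [DecidableEq ℬ] [Nonempty ℬ]
    {h p : ℕ} (i : Fin p)
    {δ τ φ : ℝ} (hδ0 : 0 < δ)
    (hφ0 : 0 < φ) (hτh : (2:ℝ)^(-(h:ℝ)) ≤ τ)
    (g : 𝒜 → ℬ → Bool) (hg : HasHittingMonoDists g δ h)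
    (A : Finset (Fin p → 𝒜)) (B : Finset (Fin p → ℬ))
    (hAne : A.Nonempty) (hBne : B.Nonempty)
    (hAth : Thick τ A) (hBth : Thick τ B)
    (hdeg : (A.card : ℝ) / ((projNe A i).card : ℝ) ≤ φ * (Fintype.card 𝒜 : ℝ)) :
    ∀ c : Bool, ∃ (U : Finset 𝒜) (V : Finset ℬ),
      (∀ u ∈ U, ∀ v ∈ V, g u v = c) ∧
      Thick τ (projNe (A.filter fun a => a i ∈ U) i) ∧
      Thick τ (projNe (B.filter fun b => b i ∈ V) i) ∧
      (1/φ) * (1 - 3*δ) * ((A.card : ℝ) / (Fintype.card 𝒜 : ℝ)^p)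
        ≤ ((projNe (A.filter fun a => a i ∈ U) i).card : ℝ) / (Fintype.card 𝒜 : ℝ)^(p-1) ∧
      (1 - 3*δ) * ((B.card : ℝ) / (Fintype.card ℬ : ℝ)^p)
        ≤ ((projNe (B.filter fun b => b i ∈ V) i).card : ℝ) / (Fintype.card ℬ : ℝ)^(p-1) := by
  intro c
  obtain ⟨σ, hσ, hmono⟩ := hg c
  obtain ⟨R, hR, hU, hV⟩ := hσ.exists_rect_hits_most (hAne.image _) (hBne.image _)
    ((hAth.mono hτh) i) ((hBth.mono hτh) i)
  have hδ : 1 - 3 * δ ≤ 1 - 2 * δ := by linarith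
  have hA : (A.card : ℝ) ≤ φ * Fintype.card 𝒜 * (projNe A i).card :=
    (div_le_iff₀ (by exact_mod_cast (hAne.image _).card_pos)).mp hdeg
  have hB : (B.card : ℝ) ≤ Fintype.card ℬ * (projNe B i).card := by
    rw [mul_comm]; exact_mod_cast card_le_card_projNe_mul B i
  refine ⟨R.1, R.2, hmono R hR, hAth.projNe_filter i R.1, hBth.projNe_filter i R.2, ?_, ?_⟩
  · rw [projNe_filter_mem, one_div_mul_eq_div]
    refine mul_div_pow_le_div_pow_pred i.pos (Nat.cast_pos.mpr Fintype.card_pos) ?_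
    rw [div_mul_eq_mul_div, div_le_iff₀ hφ0, mul_comm _ φ, ← mul_assoc]
    exact mul_le_mul_of_mul_le_of_le_mul
      ((mul_le_mul_of_nonneg_right hδ (Nat.cast_nonneg _)).trans hU) (Nat.cast_nonneg _) hA
      (Nat.cast_nonneg _) (by positivity)
  · rw [projNe_filter_mem]
    refine mul_div_pow_le_div_pow_pred i.pos (Nat.cast_pos.mpr Fintype.card_pos) ?_
    exact mul_le_mul_of_mul_le_of_le_mul
      ((mul_le_mul_of_nonneg_right hδ (Nat.cast_nonneg _)).trans hV) (Nat.cast_nonneg _) hB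
      (Nat.cast_nonneg _) (Nat.cast_nonneg _)

/-- projection lemma. -/
theorem projection_lemma
    {𝒜 ℬ : Type*} [Fintype 𝒜] [DecidableEq 𝒜] [Nonempty 𝒜]
    [Fintype ℬ] [DecidableEq ℬ] [Nonempty ℬ]
    {h p : ℕ} (hh : 1 ≤ h) (hp : 2 ≤ p) (i : Fin p)
    {δ τ φ : ℝ} (hδ0 : 0 < δ) (hδ1 : δ < 1) (hτ0 : 0 < τ) (hτ1 : τ < 1)
    (hφ0 : 0 < φ) (hφ1 : φ < 1) (hτh : (2:ℝ)^(-(h:ℝ)) ≤ τ)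
    (g : 𝒜 → ℬ → Bool) (hg : HasHittingMonoDists g δ h)
    (A : Finset (Fin p → 𝒜)) (B : Finset (Fin p → ℬ))
    (hAne : A.Nonempty) (hBne : B.Nonempty)
    (hAth : Thick τ A) (hBth : Thick τ B)
    (hdeg : (A.card : ℝ) / ((projNe A i).card : ℝ) ≤ φ * (Fintype.card 𝒜 : ℝ)) :
    ∀ c : Bool, ∃ (U : Finset 𝒜) (V : Finset ℬ),
      (∀ u ∈ U, ∀ v ∈ V, g u v = c) ∧
      Thick τ (projNe (A.filter fun a => a i ∈ U) i) ∧
      Thick τ (projNe (B.filter fun b => b i ∈ V) i) ∧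
      (1/φ) * (1 - 3*δ) * ((A.card : ℝ) / (Fintype.card 𝒜 : ℝ)^p)
        ≤ ((projNe (A.filter fun a => a i ∈ U) i).card : ℝ) / (Fintype.card 𝒜 : ℝ)^(p-1) ∧
      (1 - 3*δ) * ((B.card : ℝ) / (Fintype.card ℬ : ℝ)^p)
        ≤ ((projNe (B.filter fun b => b i ∈ V) i).card : ℝ) / (Fintype.card ℬ : ℝ)^(p-1) :=
  projection_lemma_general i hδ0 hφ0 hτh g hg A B hAne hBne hAth hBth hdeg
end

section
/- Let p ≥ 1 and h ≥ 1 be integers and δ, τ ∈ (0,1) real numbers with τ ≥ 2^{−h}. Let 𝒜, ℬ be finite nonempty sets and g : 𝒜 × ℬ → {0,1} a function which has (δ,h)-hitting monochromatic rectangle-distributions. Suppose A ⊆ 𝒜^p and B ⊆ ℬ^p are nonempty and each τ-thick. Then for every z ∈ {0,1}^p there exist a ∈ A and b ∈ B such that g(a_i, b_i) = z_i for every i ∈ {1,…,p}. -/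
open Finset

lemma proj_thick {𝒜 : Type*} {ι : Type*} [DecidableEq ι] [Fintype ι] [Fintype 𝒜] [DecidableEq 𝒜]
    {τ : ℝ} {A : Finset (ι → 𝒜)} (hA : Thick τ A) (i : ι) :
    Thick τ (projNe A i) := by
  intro j a'' ha''
  simp only [projNe, Finset.mem_image] at ha''
  obtain ⟨a', ha', rfl⟩ := ha''
  obtain ⟨a, ha, rfl⟩ := ha'
  have hsub : extNe A j.1 (fun k : {k : ι // k ≠ j.1} => a k.1) ⊆
      extNe (projNe A i) j (fun k => (fun m : {m : ι // m ≠ i} => a m.1) k.1) := by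
    intro s hs
    simp only [extNe, Finset.mem_filter, Finset.mem_univ, true_and] at hs ⊢
    simp only [projNe, Finset.mem_image]
    refine ⟨insNe j.1 (fun k => a k.1) s, hs, ?_⟩
    funext k
    by_cases hk : k = j
    · subst hk; simp [insNe]
    · have hk1 : k.1 ≠ j.1 := fun h => hk (Subtype.ext h)
      simp [insNe, hk, hk1]
  have hmem : (fun k : {k : ι // k ≠ j.1} => a k.1) ∈ projNe A j.1 :=
    Finset.mem_image.2 ⟨a, ha, rfl⟩
  calc τ * (Fintype.card 𝒜 : ℝ) ≤ _ := hA j.1 _ hmem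
    _ ≤ _ := by exact_mod_cast Finset.card_le_card hsub

lemma key_lemma {𝒜 ℬ : Type*} [Fintype 𝒜] [DecidableEq 𝒜] [Fintype ℬ] [DecidableEq ℬ]
    {h : ℕ} {δ τ : ℝ} (hδ1 : δ < 1) (hτh : (2:ℝ)^(-(h:ℝ)) ≤ τ)
    (g : 𝒜 → ℬ → Bool) (hg : HasHittingMonoDists g δ h) :
    ∀ (n : ℕ) (ι : Type) (_ : DecidableEq ι) (_ : Fintype ι), Fintype.card ι = n →
      ∀ (A : Finset (ι → 𝒜)) (B : Finset (ι → ℬ)),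
      A.Nonempty → B.Nonempty → Thick τ A → Thick τ B →
      ∀ z : ι → Bool, ∃ a ∈ A, ∃ b ∈ B, ∀ i, g (a i) (b i) = z i := by
  intro n
  induction n with
  | zero =>
    intro ι _ _ hcard A B hAne hBne _ _ z
    obtain ⟨a, ha⟩ := hAne; obtain ⟨b, hb⟩ := hBne
    have hE : IsEmpty ι := Fintype.card_eq_zero_iff.mp hcard
    exact ⟨a, ha, b, hb, fun i => (hE.false i).elim⟩
  | succ n ih =>
    intro ι _ _ hcard A B hAne hBne hAth hBth z
    have hne : Nonempty ι := Fintype.card_pos_iff.mp (by omega)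
    obtain ⟨i⟩ := hne
    have hcard' : Fintype.card {j : ι // j ≠ i} = n := by
      have h1 : Fintype.card {j : ι // j = i} = 1 := Fintype.card_subtype_eq i
      have h2 : Fintype.card {j : ι // j ≠ i} = Fintype.card ι - Fintype.card {j : ι // j = i} :=
        Fintype.card_subtype_compl (fun j : ι => j = i)
      rw [h1, hcard] at h2
      omega
    obtain ⟨a', ha', b', hb', hab'⟩ :=
      ih {j : ι // j ≠ i} inferInstance inferInstance hcard' (projNe A i) (projNe B i)
        (hAne.image _) (hBne.image _) (proj_thick hAth i) (proj_thick hBth i)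
        (fun k => z k.1)
    -- extension sets are large
    have hcardA : (2:ℝ)^(-(h:ℝ)) * (Fintype.card 𝒜 : ℝ) ≤ ((extNe A i a').card : ℝ) :=
      le_trans (mul_le_mul_of_nonneg_right hτh (by positivity)) (hAth i a' ha')
    have hcardB : (2:ℝ)^(-(h:ℝ)) * (Fintype.card ℬ : ℝ) ≤ ((extNe B i b').card : ℝ) :=
      le_trans (mul_le_mul_of_nonneg_right hτh (by positivity)) (hBth i b' hb')
    obtain ⟨σ, hσhit, hσmono⟩ := hg (z i)
    have hprob := hσhit (extNe A i a') (extNe B i b') hcardA hcardB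
    have hpos : 0 < rectProb σ
        (fun R => ((R.1 ×ˢ R.2) ∩ (extNe A i a' ×ˢ extNe B i b')).Nonempty) :=
      lt_of_lt_of_le (by linarith) hprob
    have hex : ∃ R, ((R.1 ×ˢ R.2) ∩ (extNe A i a' ×ˢ extNe B i b')).Nonempty ∧
        σ.prob R ≠ 0 := by
      by_contra hcon
      push_neg at hcon
      have : rectProb σ
          (fun R => ((R.1 ×ˢ R.2) ∩ (extNe A i a' ×ˢ extNe B i b')).Nonempty) = 0 := by
        unfold rectProb
        refine Finset.sum_eq_zero fun R _ => ?_
        split_ifs with hR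
        · exact hcon R hR
        · rfl
      linarith
    obtain ⟨R, hR, hRprob⟩ := hex
    obtain ⟨⟨u, v⟩, huv⟩ := hR
    rw [Finset.mem_inter, Finset.mem_product, Finset.mem_product] at huv
    obtain ⟨⟨hu1, hv1⟩, hu2, hv2⟩ := huv
    have hguv : g u v = z i := hσmono R hRprob u hu1 v hv1
    simp only [extNe, Finset.mem_filter, Finset.mem_univ, true_and] at hu2 hv2
    refine ⟨insNe i a' u, hu2, insNe i b' v, hv2, fun j => ?_⟩
    by_cases hj : j = i
    · subst hj; simpa [insNe] using hguv
    · simpa [insNe, hj] using hab' ⟨j, hj⟩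

/-- on a thick rectangle, `g^p` attains every value `z ∈ {0,1}^p`. -/
theorem thick_rectangle_attains_all_values
    {𝒜 ℬ : Type*} [Fintype 𝒜] [DecidableEq 𝒜] [Nonempty 𝒜]
    [Fintype ℬ] [DecidableEq ℬ] [Nonempty ℬ]
    {p h : ℕ} (hp : 1 ≤ p) (hh : 1 ≤ h)
    {δ τ : ℝ} (hδ0 : 0 < δ) (hδ1 : δ < 1) (hτ0 : 0 < τ) (hτ1 : τ < 1)
    (hτh : (2:ℝ)^(-(h:ℝ)) ≤ τ)
    (g : 𝒜 → ℬ → Bool) (hg : HasHittingMonoDists g δ h)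
    (A : Finset (Fin p → 𝒜)) (B : Finset (Fin p → ℬ))
    (hAne : A.Nonempty) (hBne : B.Nonempty)
    (hAth : Thick τ A) (hBth : Thick τ B) :
    ∀ z : Fin p → Bool, ∃ a ∈ A, ∃ b ∈ B, ∀ i : Fin p, g (a i) (b i) = z i :=
  key_lemma hδ1 hτh g hg p (Fin p) inferInstance inferInstance (Fintype.card_fin p)
    A B hAne hBne hAth hBth
end

section
/- For all sufficiently large n, the following holds: for every A ⊆ {0,1}^n with |A| ≥ 2^{(99/100)n}, the number of strings y ∈ {0,1}^n such that d_H(y,a) ≤ n/8 for some a ∈ A is at least 2^n − 2^{(99/100)n}. -/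
open Finset Real

namespace BallProof

noncomputable section
open Classical

def dst {n : ℕ} (A : Finset (Fin n → Bool)) (x : Fin n → Bool) : ℕ :=
  sInf (hammingDist x '' (A : Set (Fin n → Bool)))

lemma dst_le {n : ℕ} {A : Finset (Fin n → Bool)} {a : Fin n → Bool} (ha : a ∈ A)
    (x : Fin n → Bool) : dst A x ≤ hammingDist x a :=
  Nat.sInf_le ⟨a, by simpa using ha, rfl⟩

lemma dst_spec {n : ℕ} {A : Finset (Fin n → Bool)} (hA : A.Nonempty) (x : Fin n → Bool) :
    ∃ a ∈ A, dst A x = hammingDist x a := by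
  have hne : (hammingDist x '' (A : Set (Fin n → Bool))).Nonempty :=
    ⟨_, ⟨hA.choose, by simpa using hA.choose_spec, rfl⟩⟩
  obtain ⟨a, ha, h⟩ := Nat.sInf_mem hne
  exact ⟨a, by simpa using ha, h.symm⟩

def fib {n : ℕ} (A : Finset (Fin (n+1) → Bool)) (b : Bool) : Finset (Fin n → Bool) :=
  univ.filter (fun y => Fin.cons b y ∈ A)

lemma hamming_cons {n : ℕ} (b c : Bool) (x y : Fin n → Bool) :
    hammingDist (Fin.cons b x : Fin (n+1) → Bool) (Fin.cons c y)
      = (if b = c then 0 else 1) + hammingDist x y := by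
  show (Finset.filter _ Finset.univ).card = _ + (Finset.filter _ Finset.univ).card
  rw [Finset.card_filter, Finset.card_filter, Fin.sum_univ_succ]
  simp only [Fin.cons_zero, Fin.cons_succ]
  split <;> simp_all

lemma sum_cons {M : Type*} [AddCommMonoid M] {n : ℕ} (f : (Fin (n+1) → Bool) → M) :
    ∑ x : Fin (n+1) → Bool, f x
      = (∑ y : Fin n → Bool, f (Fin.cons false y)) + ∑ y : Fin n → Bool, f (Fin.cons true y) := by
  calc ∑ x : Fin (n+1) → Bool, f x
      = ∑ p : Bool × (Fin n → Bool), f (Fin.cons p.1 p.2) :=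
        (Fintype.sum_equiv (Fin.consEquiv (fun _ => Bool)) _ _ (fun p => rfl)).symm
    _ = ∑ b : Bool, ∑ y : Fin n → Bool, f (Fin.cons b y) := Fintype.sum_prod_type _
    _ = _ := by simp [Fintype.sum_bool, add_comm]

lemma sum_cons' {M : Type*} [AddCommMonoid M] {n : ℕ} (b : Bool) (f : (Fin (n+1) → Bool) → M) :
    ∑ x : Fin (n+1) → Bool, f x
      = (∑ y : Fin n → Bool, f (Fin.cons (!b) y)) + ∑ y : Fin n → Bool, f (Fin.cons b y) := by
  cases b <;> simp [sum_cons, add_comm]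

lemma card_fib {n : ℕ} (A : Finset (Fin (n+1) → Bool)) (b : Bool) :
    A.card = (fib A (!b)).card + (fib A b).card := by
  have h1 : A = univ.filter (· ∈ A) := by ext; simp
  conv_lhs => rw [h1]
  rw [Finset.card_filter, sum_cons' b, fib, fib, Finset.card_filter, Finset.card_filter]


lemma dst_cons_le {n : ℕ} {A : Finset (Fin (n+1) → Bool)} {c : Bool}
    (h : (fib A c).Nonempty) (b : Bool) (x : Fin n → Bool) :
    dst A (Fin.cons b x) ≤ (if b = c then 0 else 1) + dst (fib A c) x := by
  obtain ⟨y, hy, hdy⟩ := dst_spec h x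
  have hmem : (Fin.cons c y : Fin (n+1) → Bool) ∈ A := by simpa [fib] using hy
  calc dst A (Fin.cons b x) ≤ hammingDist (Fin.cons b x : Fin (n+1) → Bool) (Fin.cons c y) :=
        dst_le hmem _
    _ = (if b = c then 0 else 1) + hammingDist x y := hamming_cons ..
    _ = _ := by rw [hdy]



lemma hcosh (t : ℝ) : 2 + Real.exp t + Real.exp (-t) ≤ 4 * Real.exp (t^2/4) := by
  have h := Real.cosh_le_exp_half_sq (t/2)
  rw [Real.cosh_eq] at h
  have h8 : Real.exp (t/2) + Real.exp (-(t/2)) ≤ 2 * Real.exp (t^2/8) := by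
    have : (t/2)^2/2 = t^2/8 := by ring
    rw [this] at h; linarith
  have e1 : Real.exp (t/2) * Real.exp (t/2) = Real.exp t := by
    rw [← Real.exp_add]; ring_nf
  have e2 : Real.exp (t/2) * Real.exp (-(t/2)) = 1 := by
    rw [← Real.exp_add]; simp
  have e3 : Real.exp (-(t/2)) * Real.exp (-(t/2)) = Real.exp (-t) := by
    rw [← Real.exp_add]; ring_nf
  have e4 : Real.exp (t^2/8) * Real.exp (t^2/8) = Real.exp (t^2/4) := by
    rw [← Real.exp_add]; ring_nf
  nlinarith [Real.exp_pos (t/2), Real.exp_pos (-(t/2)), Real.exp_pos (t^2/8),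
    sq_nonneg (Real.exp (t/2) + Real.exp (-(t/2)))]

lemma arith (t M S1 S2 T1 T2 : ℝ) (c d : ℕ) (ht : 0 ≤ t) (hM : 0 ≤ M)
    (hd : 0 < d) (hcd : c ≤ d) (hS2 : 0 ≤ S2) (hT1 : 0 ≤ T1)
    (h2 : S2 * d ≤ M)
    (hT2 : T2 ≤ S2)
    (hT1e : T1 ≤ Real.exp t * S2)
    (hT1s : c ≠ 0 → T1 ≤ S1 ∧ S1 * c ≤ M ∧ 0 ≤ S1) :
    (T1 + T2) * ((c : ℝ) + d) ≤ 4 * M * Real.exp (t^2/4) := by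
  have het : 1 ≤ Real.exp t := Real.one_le_exp ht
  have hent : Real.exp (-t) ≤ 1 := Real.exp_le_one_iff.mpr (by linarith)
  have hentpos : 0 < Real.exp (-t) := Real.exp_pos _
  have hcsh := hcosh t
  have hcshM := mul_le_mul_of_nonneg_left hcsh hM
  have hdR : (0:ℝ) < d := by exact_mod_cast hd
  have he : Real.exp (-t) * Real.exp t = 1 := by rw [← Real.exp_add]; simp
  rcases Nat.eq_zero_or_pos c with hc0 | hcpos
  · -- small fiber empty
    subst hc0
    have hs : T1 + T2 ≤ Real.exp t * S2 + S2 := by linarith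
    have h3 : Real.exp t * (S2 * d) ≤ Real.exp t * M :=
      mul_le_mul_of_nonneg_left h2 (Real.exp_pos t).le
    calc (T1 + T2) * (((0:ℕ):ℝ) + d) = (T1 + T2) * d := by norm_num
      _ ≤ (Real.exp t * S2 + S2) * d := mul_le_mul_of_nonneg_right hs hdR.le
      _ = Real.exp t * (S2 * d) + S2 * d := by ring
      _ ≤ Real.exp t * M + M := by linarith
      _ ≤ M * (2 + Real.exp t + Real.exp (-t)) := by nlinarith
      _ ≤ M * (4 * Real.exp (t^2/4)) := hcshM
      _ = 4 * M * Real.exp (t^2/4) := by ring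
  · -- both fibers nonempty
    obtain ⟨hT1S, h1, hS1⟩ := hT1s hcpos.ne'
    have hcR : (0:ℝ) < c := by exact_mod_cast hcpos
    have hcdR : (c:ℝ) ≤ d := by exact_mod_cast hcd
    set E : ℝ := min ((d:ℝ)/c) (Real.exp t) with hE
    have hE1 : 1 ≤ E := le_min ((one_le_div hcR).mpr hcdR) het
    have hE0 : 0 < E := lt_of_lt_of_le one_pos hE1
    have hE2 : E ≤ Real.exp t := min_le_right _ _
    have hEinv : E * (1/E) = 1 := by field_simp
    have hEc : E * c ≤ d := by
      have h := min_le_left ((d:ℝ)/c) (Real.exp t)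
      calc E * c ≤ ((d:ℝ)/c) * c := mul_le_mul_of_nonneg_right h hcR.le
        _ = d := by field_simp
    set m : ℝ := min S1 (Real.exp t * S2) with hm
    have hTm : T1 ≤ m := le_min hT1S hT1e
    have hm0 : 0 ≤ m := le_trans hT1 hTm
    have hmd : m * d ≤ E * M := by
      rcases le_total ((d:ℝ)/c) (Real.exp t) with h | h
      · have hEeq : E = (d:ℝ)/c := min_eq_left h
        calc m * d ≤ S1 * d := mul_le_mul_of_nonneg_right (min_le_left _ _) hdR.le
          _ = (S1 * c) * ((d:ℝ)/c) := by field_simp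
          _ ≤ M * ((d:ℝ)/c) := mul_le_mul_of_nonneg_right h1 (by positivity)
          _ = E * M := by rw [hEeq]; ring
      · have hEeq : E = Real.exp t := min_eq_right h
        calc m * d ≤ (Real.exp t * S2) * d :=
              mul_le_mul_of_nonneg_right (min_le_right _ _) hdR.le
          _ = Real.exp t * (S2 * d) := by ring
          _ ≤ Real.exp t * M := mul_le_mul_of_nonneg_left h2 (Real.exp_pos t).le
          _ = E * M := by rw [hEeq]
    have hmc : m * c ≤ M := by
      calc m * c ≤ S1 * c := mul_le_mul_of_nonneg_right (min_le_left _ _) hcR.le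
        _ ≤ M := h1
    have hS2c : S2 * c * E ≤ M := by
      calc S2 * c * E = S2 * (E * c) := by ring
        _ ≤ S2 * d := mul_le_mul_of_nonneg_left hEc hS2
        _ ≤ M := h2
    have hS2cM : S2 * c ≤ M * (1/E) := by
      rw [mul_one_div, le_div_iff₀ hE0]; exact hS2c
    have hEE : E + 1/E ≤ Real.exp t + Real.exp (-t) := by
      have key : 0 ≤ (Real.exp t - E) * (E - Real.exp (-t)) :=
        mul_nonneg (by linarith) (by linarith)
      have expand : (Real.exp t - E) * (E - Real.exp (-t))
          = E * (Real.exp t + Real.exp (-t)) - E^2 - 1 := by linear_combination -he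
      have hfin : (E + 1/E) * E ≤ (Real.exp t + Real.exp (-t)) * E := by
        have hid : (E + 1/E) * E = E^2 + 1 := by field_simp
        nlinarith
      exact le_of_mul_le_mul_right hfin hE0
    have hEEM := mul_le_mul_of_nonneg_left hEE hM
    calc (T1 + T2) * ((c:ℝ) + d) ≤ (m + S2) * ((c:ℝ) + d) := by
          apply mul_le_mul_of_nonneg_right (by linarith) (by positivity)
      _ = m*c + m*d + S2*c + S2*d := by ring
      _ ≤ M + E*M + M*(1/E) + M := by linarith
      _ = M * (2 + (E + 1/E)) := by ring
      _ ≤ M * (2 + (Real.exp t + Real.exp (-t))) := by linarith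
      _ ≤ M * (4 * Real.exp (t^2/4)) := by
          have : M * (2 + (Real.exp t + Real.exp (-t))) = M * (2 + Real.exp t + Real.exp (-t)) := by ring
          rw [this]; exact hcshM
      _ = 4 * M * Real.exp (t^2/4) := by ring

lemma key (t : ℝ) (ht : 0 ≤ t) :
    ∀ (n : ℕ) (A : Finset (Fin n → Bool)), A.Nonempty →
      (∑ x : Fin n → Bool, Real.exp (t * dst A x)) * A.card
        ≤ 4^n * Real.exp (t^2 * n / 4) := by
  intro n
  induction n with
  | zero =>
      intro A hA
      have h1 : A.card ≤ 1 := by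
        have h := Finset.card_le_univ A
        simpa using h
      have hcard : A.card = 1 := le_antisymm h1 (Finset.card_pos.mpr hA)
      have hd : ∀ x : Fin 0 → Bool, dst A x = 0 := by
        intro x
        obtain ⟨a, ha, h⟩ := dst_spec hA x
        rw [h, Subsingleton.elim x a, hammingDist_self]
      simp [hd, hcard]
  | succ n IH =>
      intro A hA
      obtain ⟨a, ha⟩ := hA
      have hpos : 0 < (fib A (a 0)).card := by
        apply Finset.card_pos.mpr
        exact ⟨Fin.tail a, by simp [fib, Fin.cons_self_tail, ha]⟩
      have hex : ∃ b : Bool, (fib A b).Nonempty ∧ (fib A (!b)).card ≤ (fib A b).card := by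
        rcases le_total ((fib A false).card) ((fib A true).card) with h | h
        · refine ⟨true, Finset.card_pos.mp ?_, by simpa using h⟩
          cases h0 : a 0 <;> rw [h0] at hpos <;> omega
        · refine ⟨false, Finset.card_pos.mp ?_, by simpa using h⟩
          cases h0 : a 0 <;> rw [h0] at hpos <;> omega
      obtain ⟨b, hb, hbig⟩ := hex
      set M' : ℝ := 4^n * Real.exp (t^2 * n / 4) with hM'
      set c := (fib A (!b)).card with hc
      set d := (fib A b).card with hdd
      have hdpos : 0 < d := Finset.card_pos.mpr hb
      set S2 : ℝ := ∑ x : Fin n → Bool, Real.exp (t * dst (fib A b) x) with hS2def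
      set S1 : ℝ := ∑ x : Fin n → Bool, Real.exp (t * dst (fib A (!b)) x) with hS1def
      set T1 : ℝ := ∑ x : Fin n → Bool, Real.exp (t * dst A (Fin.cons (!b) x)) with hT1def
      set T2 : ℝ := ∑ x : Fin n → Bool, Real.exp (t * dst A (Fin.cons b x)) with hT2def
      have hsum : (∑ x : Fin (n+1) → Bool, Real.exp (t * dst A x)) = T1 + T2 :=
        sum_cons' b _
      have hcard : ((A.card : ℕ) : ℝ) = (c:ℝ) + d := by
        rw [card_fib A b]; push_cast; ring
      have hT2b : T2 ≤ S2 := by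
        apply Finset.sum_le_sum
        intro x _
        apply Real.exp_le_exp.mpr
        have h := dst_cons_le hb b x
        rw [if_pos rfl, Nat.zero_add] at h
        exact mul_le_mul_of_nonneg_left (by exact_mod_cast h) ht
      have hT1e : T1 ≤ Real.exp t * S2 := by
        rw [hS2def, Finset.mul_sum]
        apply Finset.sum_le_sum
        intro x _
        have h := dst_cons_le hb (!b) x
        rw [if_neg (by simp)] at h
        have h' : (dst A (Fin.cons (!b) x) : ℝ) ≤ 1 + (dst (fib A b) x : ℝ) := by
          exact_mod_cast h
        calc Real.exp (t * dst A (Fin.cons (!b) x))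
            ≤ Real.exp (t + t * dst (fib A b) x) := by
              apply Real.exp_le_exp.mpr; nlinarith
          _ = Real.exp t * Real.exp (t * dst (fib A b) x) := Real.exp_add _ _
      have hT1s : c ≠ 0 → T1 ≤ S1 ∧ S1 * c ≤ M' ∧ 0 ≤ S1 := by
        intro hcne
        have hbne : (fib A (!b)).Nonempty := Finset.card_pos.mp (Nat.pos_of_ne_zero hcne)
        refine ⟨?_, IH _ hbne, by positivity⟩
        apply Finset.sum_le_sum
        intro x _
        apply Real.exp_le_exp.mpr
        have h := dst_cons_le hbne (!b) x
        rw [if_pos rfl, Nat.zero_add] at h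
        exact mul_le_mul_of_nonneg_left (by exact_mod_cast h) ht
      have h2 : S2 * d ≤ M' := IH _ hb
      calc (∑ x : Fin (n+1) → Bool, Real.exp (t * dst A x)) * A.card
          = (T1 + T2) * ((c:ℝ) + d) := by rw [hsum, hcard]
        _ ≤ 4 * M' * Real.exp (t^2/4) :=
            arith t M' S1 S2 T1 T2 c d ht (by positivity) hdpos hbig
              (by positivity) (by positivity) h2 hT2b hT1e hT1s
        _ = 4^(n+1) * Real.exp (t^2 * ((n+1 : ℕ) : ℝ) / 4) := by
            rw [hM']
            have h1 : (t^2 * (((n+1:ℕ)):ℝ)/4) = t^2*(n:ℝ)/4 + t^2/4 := by push_cast; ring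
            rw [h1, Real.exp_add, pow_succ 4 n]
            ring

end
end BallProof



/-- for all sufficiently large `n`, for every `A ⊆ {0,1}^n` with
`|A| ≥ 2^{(99/100)n}`, the number of strings within Hamming distance `n/8` of `A`
is at least `2^n − 2^{(99/100)n}`. -/
theorem ball_around_large_set_is_almost_everything :
    ∃ N : ℕ, ∀ n ≥ N, ∀ A : Set (Fin n → Bool),
      (2:ℝ) ^ ((99/100 : ℝ) * n) ≤ (Nat.card A : ℝ) →
      (2:ℝ) ^ (n : ℕ) - (2:ℝ) ^ ((99/100 : ℝ) * n) ≤
        (Nat.card {y : Fin n → Bool | ∃ a ∈ A, (hammingDist y a : ℝ) ≤ (n : ℝ) / 8} : ℝ) := by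
  classical
  use 0
  intro n _ A hcard
  set A' : Finset (Fin n → Bool) := (Set.toFinite A).toFinset with hA'
  have hAcard : (Nat.card ↥A : ℝ) = (A'.card : ℝ) := by
    rw [Nat.card_coe_set_eq, Set.ncard_eq_toFinset_card A (Set.toFinite A)]
  have hApow : (2:ℝ) ^ ((99/100 : ℝ) * n) ≤ (A'.card : ℝ) := by rw [← hAcard]; exact hcard
  have hpow_pos : (0:ℝ) < (2:ℝ) ^ ((99/100 : ℝ) * n) := Real.rpow_pos_of_pos two_pos _
  have hA'ne : A'.Nonempty := by
    apply Finset.card_pos.mp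
    apply Nat.pos_of_ne_zero
    intro h
    rw [h] at hApow
    norm_num at hApow
    linarith
  set P : (Fin n → Bool) → Prop := fun y => ∃ a ∈ A, (hammingDist y a : ℝ) ≤ (n:ℝ)/8 with hP
  have hSeq : {y : Fin n → Bool | P y} = ↑(univ.filter P) := by ext y; simp
  have hScard : (Nat.card {y : Fin n → Bool | P y} : ℝ) = ((univ.filter P).card : ℝ) := by
    rw [hSeq, Nat.card_coe_set_eq, Set.ncard_coe_finset]
  set B := univ.filter (fun y => ¬ P y) with hB
  have hPB : (univ.filter P).card + B.card = 2^n := by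
    rw [hB, Finset.card_filter_add_card_filter_not, Finset.card_univ]
    simp
  have hBd : ∀ y ∈ B, ((n:ℝ)/8) ≤ ((BallProof.dst A' y : ℕ) : ℝ) := by
    intro y hy
    obtain ⟨a, haA', hda⟩ := BallProof.dst_spec hA'ne y
    have haA : a ∈ A := by rw [hA'] at haA'; exact (Set.Finite.mem_toFinset _).mp haA'
    have hnp : ¬ P y := (Finset.mem_filter.mp hy).2
    simp only [hP] at hnp; push_neg at hnp
    have h := hnp a haA
    rw [hda]; linarith
  have hkey := BallProof.key (1/4) (by norm_num) n A' hA'ne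
  have hBsum : (B.card : ℝ) * Real.exp ((n:ℝ)/32)
      ≤ ∑ x : Fin n → Bool, Real.exp ((1/4) * BallProof.dst A' x) := by
    calc (B.card:ℝ) * Real.exp ((n:ℝ)/32) = ∑ _x ∈ B, Real.exp ((n:ℝ)/32) := by
          rw [Finset.sum_const, nsmul_eq_mul]
      _ ≤ ∑ x ∈ B, Real.exp ((1/4:ℝ) * BallProof.dst A' x) := by
          apply Finset.sum_le_sum; intro x hx
          apply Real.exp_le_exp.mpr
          have := hBd x hx; linarith
      _ ≤ ∑ x : Fin n → Bool, Real.exp ((1/4:ℝ) * BallProof.dst A' x) :=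
          Finset.sum_le_sum_of_subset_of_nonneg (Finset.subset_univ B)
            (fun x _ _ => (Real.exp_pos _).le)
  have hchain : (B.card : ℝ) * Real.exp ((n:ℝ)/32) * (A'.card:ℝ)
      ≤ 4^n * Real.exp ((n:ℝ)/64) := by
    calc (B.card : ℝ) * Real.exp ((n:ℝ)/32) * (A'.card:ℝ)
        ≤ (∑ x : Fin n → Bool, Real.exp ((1/4:ℝ) * BallProof.dst A' x)) * A'.card :=
          mul_le_mul_of_nonneg_right hBsum (Nat.cast_nonneg _)
      _ ≤ 4^n * Real.exp ((1/4:ℝ)^2 * n / 4) := hkey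
      _ = 4^n * Real.exp ((n:ℝ)/64) := by rw [show ((1/4:ℝ)^2 * (n:ℝ) / 4) = (n:ℝ)/64 by ring]
  have hlog : Real.log 2 < 0.6931471808 := Real.log_two_lt_d9
  have h4n : ((4:ℝ)^n) = Real.exp (Real.log 2 * (2*(n:ℝ))) := by
    have h44 : (4:ℝ)^n = (2:ℝ)^(2*n) := by rw [pow_mul]; norm_num
    rw [h44, ← Real.rpow_natCast (2:ℝ) (2*n), Real.rpow_def_of_pos two_pos]
    push_cast; ring_nf
  have hX0pos : (0:ℝ) < Real.exp ((n:ℝ)/32) * (2:ℝ)^((99/100:ℝ)*(n:ℝ)) := by positivity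
  have hBbound : (B.card : ℝ) ≤ (2:ℝ)^((99/100:ℝ)*(n:ℝ)) := by
    have h1 : (B.card:ℝ) * (Real.exp ((n:ℝ)/32) * (2:ℝ)^((99/100:ℝ)*(n:ℝ)))
        ≤ (B.card:ℝ) * (Real.exp ((n:ℝ)/32) * A'.card) :=
      mul_le_mul_of_nonneg_left (mul_le_mul_of_nonneg_left hApow (Real.exp_pos _).le)
        (Nat.cast_nonneg _)
    have h2 : (B.card:ℝ) * (Real.exp ((n:ℝ)/32) * A'.card) ≤ 4^n * Real.exp ((n:ℝ)/64) := by
      calc (B.card:ℝ) * (Real.exp ((n:ℝ)/32) * A'.card)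
          = (B.card:ℝ) * Real.exp ((n:ℝ)/32) * A'.card := by ring
        _ ≤ _ := hchain
    have h3 : (4:ℝ)^n * Real.exp ((n:ℝ)/64)
        ≤ (2:ℝ)^((99/100:ℝ)*(n:ℝ)) * (Real.exp ((n:ℝ)/32) * (2:ℝ)^((99/100:ℝ)*(n:ℝ))) := by
      rw [h4n, Real.rpow_def_of_pos two_pos]
      simp only [← Real.exp_add]
      apply Real.exp_le_exp.mpr
      have hn : (0:ℝ) ≤ (n:ℝ) := Nat.cast_nonneg n
      have hln : (n:ℝ) * Real.log 2 ≤ (n:ℝ) * 0.6931471808 :=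
        mul_le_mul_of_nonneg_left hlog.le hn
      nlinarith
    have hcmp := le_trans h1 (le_trans h2 h3)
    exact le_of_mul_le_mul_right hcmp hX0pos
  have hPBR : ((univ.filter P).card : ℝ) + (B.card : ℝ) = (2:ℝ)^n := by
    have h9 : (((univ.filter P).card + B.card : ℕ) : ℝ) = ((2^n : ℕ) : ℝ) := by
      exact_mod_cast congrArg (fun k : ℕ => (k:ℝ)) hPB
    push_cast at h9
    linarith
  rw [hScard]
  linarith
end

section
/- For all sufficiently large even n, the following holds: for every A ⊆ {0,1}^n with |A| ≥ 2^{(99/100)n}, if x is chosen uniformly at random among the strings in {0,1}^n of Hamming weight exactly n/2, then Pr_x[∃ a ∈ A with d_H(a,x) ≤ n/8] ≥ 1 − 2^{−n/100}. -/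
/-!
Let `D(x)` be the Hamming distance from `x` to `A`. It is 1-Lipschitz on the cube, so by the
bounded-differences (McDiarmid) inequality, whose moment generating function bound follows by
induction on the dimension from the two-point Hoeffding lemma, both tails of `D` around its mean
`m` are at most `2^n exp(-2 s² / n)`. Since `D = 0` on `A`, the lower tail at `s = m` contains
`A`; as `|A| ≥ 2^{0.99 n}` this forces `m ≤ 0.059 n`. The upper tail at `s = n/8 - 0.059 n = 0.066 n` then
bounds the number of strings at distance more than `n/8` from `A` by `2^n e^{-0.0087 n}`, which is
smaller than a `2^{-n/100}` fraction of the `binom(n, n/2) ≥ 2^n / (n + 1)` strings of weight `n/2`.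
-/

/-- The Hamming weight of a Boolean string: the number of coordinates equal to `true`. -/
def hWt {n : ℕ} (x : Fin n → Bool) : ℕ := (Finset.univ.filter fun i => x i = true).card

open Finset Real
open scoped BigOperators

theorem exp_mul_add_exp_mul_div_two_le {a b : ℝ} (h : |a - b| ≤ 1) (t : ℝ) :
    (exp (t * a) + exp (t * b)) / 2 ≤ exp (t * ((a + b) / 2) + t ^ 2 / 8) := by
  have hcosh :
      (exp (t * a) + exp (t * b)) / 2 = exp (t * ((a + b) / 2)) * cosh (t * (a - b) / 2) := by
    rw [cosh_eq, mul_div_assoc', mul_add, ← exp_add, ← exp_add]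
    ring_nf
  have hsq : (t * (a - b) / 2) ^ 2 / 2 ≤ t ^ 2 / 8 := by
    have : (a - b) ^ 2 ≤ 1 := by nlinarith [sq_abs (a - b), abs_nonneg (a - b)]
    nlinarith [sq_nonneg t]
  rw [hcosh, exp_add]
  gcongr
  exact (cosh_le_exp_half_sq _).trans (exp_le_exp.2 hsq)

theorem hammingDist_cons {n : ℕ} {β : Type*} [DecidableEq β] (a b : β) (x y : Fin n → β) :
    hammingDist (Fin.cons a x : Fin (n + 1) → β) (Fin.cons b y) =
      (if a ≠ b then 1 else 0) + hammingDist x y := by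
  simp only [hammingDist, card_filter, Fin.sum_univ_succ, Fin.cons_zero, Fin.cons_succ]

theorem expect_cube_succ {n : ℕ} (f : (Fin (n + 1) → Bool) → ℝ) :
    𝔼 x, f x = (𝔼 x, f (Fin.cons false x) + 𝔼 x, f (Fin.cons true x)) / 2 := by
  rw [← Fintype.expect_equiv (Fin.consEquiv fun _ => Bool) (fun p => f (Fin.cons p.1 p.2)) f
    (fun _ => rfl), ← univ_product_univ,
    expect_product' univ univ fun b x => f (Fin.cons b x), Fintype.expect_eq_sum_div_card]
  simp [add_comm]

theorem expect_exp_mul_le_of_lipschitz {n : ℕ} (F : (Fin n → Bool) → ℝ)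
    (hF : ∀ x y, |F x - F y| ≤ hammingDist x y) (t : ℝ) :
    𝔼 x, exp (t * F x) ≤ exp (t * 𝔼 x, F x + t ^ 2 * n / 8) := by
  induction n with
  | zero => simp
  | succ n ih =>
    set G : Bool → (Fin n → Bool) → ℝ := fun b x => F (Fin.cons b x)
    have hG : ∀ b, ∀ x y, |G b x - G b y| ≤ hammingDist x y := fun b x y => by
      simpa [G, hammingDist_cons] using hF (Fin.cons b x) (Fin.cons b y)
    have hmeans : |𝔼 x, G false x - 𝔼 x, G true x| ≤ 1 := by
      rw [← expect_sub_distrib]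
      refine (abs_expect_le _ _).trans
        ((expect_le_expect fun x _ => ?_).trans_eq Fintype.expect_one)
      simpa [G, hammingDist_cons] using hF (Fin.cons false x) (Fin.cons true x)
    rw [expect_cube_succ, expect_cube_succ]
    calc (𝔼 x, exp (t * G false x) + 𝔼 x, exp (t * G true x)) / 2
        ≤ (exp (t * 𝔼 x, G false x + t ^ 2 * n / 8) +
            exp (t * 𝔼 x, G true x + t ^ 2 * n / 8)) / 2 := by
          gcongr <;> exact ih _ (hG _)
      _ = exp (t ^ 2 * n / 8) * ((exp (t * 𝔼 x, G false x) + exp (t * 𝔼 x, G true x)) / 2) := by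
          rw [exp_add, exp_add]; ring
      _ ≤ exp (t ^ 2 * n / 8) *
            exp (t * ((𝔼 x, G false x + 𝔼 x, G true x) / 2) + t ^ 2 / 8) := by
          gcongr; exact exp_mul_add_exp_mul_div_two_le hmeans t
      _ = _ := by rw [← exp_add]; push_cast; simp only [G]; ring_nf

theorem card_expect_add_le_le_of_lipschitz {n : ℕ} (hn : 0 < n) (F : (Fin n → Bool) → ℝ)
    (hF : ∀ x y, |F x - F y| ≤ hammingDist x y) {s : ℝ} (hs : 0 ≤ s) :
    (#{x | 𝔼 y, F y + s ≤ F x} : ℝ) ≤ 2 ^ n * exp (-2 * s ^ 2 / n) := by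
  set m := 𝔼 y, F y
  -- Chernoff's bound at the optimal parameter `t = 4s/n`.
  set t : ℝ := 4 * s / n
  have ht : 0 ≤ t := by positivity
  have hmarkov : #{x | m + s ≤ F x} • exp (t * (m + s)) ≤ ∑ x, exp (t * F x) :=
    (card_nsmul_le_sum _ _ _ fun x hx => exp_le_exp.2 <| by
      gcongr; exact (mem_filter.1 hx).2).trans
      (sum_le_univ_sum_of_nonneg fun _ => (exp_pos _).le)
  have hsum : ∑ x, exp (t * F x) = 2 ^ n * 𝔼 x, exp (t * F x) := by
    rw [Fintype.expect_eq_sum_div_card, Fintype.card_fun, Fintype.card_bool, Fintype.card_fin]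
    push_cast
    field_simp
  have hexp : t * m + t ^ 2 * n / 8 - t * (m + s) = -2 * s ^ 2 / n := by
    simp only [t]; field_simp; ring
  rw [nsmul_eq_mul, hsum, ← le_div_iff₀ (exp_pos _)] at hmarkov
  refine hmarkov.trans ?_
  rw [div_le_iff₀ (exp_pos _), mul_assoc, ← exp_add, ← hexp, sub_add_cancel]
  gcongr
  exact expect_exp_mul_le_of_lipschitz F hF t

theorem card_le_expect_sub_le_of_lipschitz {n : ℕ} (hn : 0 < n) (F : (Fin n → Bool) → ℝ)
    (hF : ∀ x y, |F x - F y| ≤ hammingDist x y) {s : ℝ} (hs : 0 ≤ s) :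
    (#{x | F x ≤ 𝔼 y, F y - s} : ℝ) ≤ 2 ^ n * exp (-2 * s ^ 2 / n) := by
  have h := card_expect_add_le_le_of_lipschitz hn (fun x => -F x)
    (fun x y => by rw [neg_sub_neg, abs_sub_comm]; exact hF x y) hs
  rw [expect_neg_distrib] at h
  convert h using 4
  constructor <;> intro <;> linarith

section InfHammingDist

variable {ι β : Type*} [Fintype ι] [DecidableEq β] (A : Finset (ι → β)) (hA : A.Nonempty)

def infHammingDist (x : ι → β) : ℕ := A.inf' hA fun a => hammingDist a x

variable {A}

theorem infHammingDist_le {a : ι → β} (ha : a ∈ A) (x : ι → β) :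
    infHammingDist A hA x ≤ hammingDist a x :=
  inf'_le _ ha

theorem exists_mem_hammingDist_eq_infHammingDist (x : ι → β) :
    ∃ a ∈ A, hammingDist a x = infHammingDist A hA x := by
  obtain ⟨a, ha, hax⟩ := exists_mem_eq_inf' hA fun a => hammingDist a x
  exact ⟨a, ha, hax.symm⟩

theorem infHammingDist_le_add_hammingDist (x y : ι → β) :
    infHammingDist A hA x ≤ infHammingDist A hA y + hammingDist x y := by
  obtain ⟨a, ha, hay⟩ := exists_mem_hammingDist_eq_infHammingDist hA y
  calc infHammingDist A hA x ≤ hammingDist a x := infHammingDist_le hA ha x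
    _ ≤ hammingDist a y + hammingDist y x := hammingDist_triangle a y x
    _ = infHammingDist A hA y + hammingDist x y := by rw [hay, hammingDist_comm y x]

theorem abs_infHammingDist_sub_le (x y : ι → β) :
    |(infHammingDist A hA x : ℝ) - infHammingDist A hA y| ≤ hammingDist x y := by
  have hxy : (infHammingDist A hA x : ℝ) ≤ infHammingDist A hA y + hammingDist x y :=
    mod_cast infHammingDist_le_add_hammingDist hA x y
  have hyx : (infHammingDist A hA y : ℝ) ≤ infHammingDist A hA x + hammingDist x y := by
    rw [hammingDist_comm]; exact_mod_cast infHammingDist_le_add_hammingDist hA y x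
  rw [abs_sub_le_iff]
  constructor <;> linarith

end InfHammingDist

theorem card_le_infHammingDist_le {n : ℕ} (hn : 0 < n) {A : Finset (Fin n → Bool)}
    (hA : A.Nonempty) {a s : ℝ} (ha : 0 ≤ a) (hs : 0 ≤ s)
    (hcard : 2 ^ n * exp (-2 * a ^ 2 / n) ≤ #A) :
    (#{x | a + s ≤ infHammingDist A hA x} : ℝ) ≤ 2 ^ n * exp (-2 * s ^ 2 / n) := by
  set D : (Fin n → Bool) → ℝ := fun x => infHammingDist A hA x
  have hD := abs_infHammingDist_sub_le hA
  set m := 𝔼 x, D x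
  have hm : 0 ≤ m := expect_nonneg fun x _ => Nat.cast_nonneg _
  have hAm : (#A : ℝ) ≤ 2 ^ n * exp (-2 * m ^ 2 / n) := by
    refine le_trans ?_ (card_le_expect_sub_le_of_lipschitz hn D hD hm)
    refine mod_cast card_le_card fun x hx => mem_filter.2 ⟨mem_univ x, ?_⟩
    rw [sub_self]
    simp [D, Nat.le_zero.1 ((infHammingDist_le hA hx x).trans_eq (hammingDist_self x))]
  have hma : m ≤ a := by
    have h := hcard.trans hAm
    rw [mul_le_mul_iff_right₀ (by positivity), exp_le_exp,
      div_le_div_iff_of_pos_right (by positivity)] at h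
    nlinarith
  calc (#{x | a + s ≤ infHammingDist A hA x} : ℝ) ≤ #{x | m + s ≤ D x} := by
        gcongr
    _ ≤ 2 ^ n * exp (-2 * s ^ 2 / n) := card_expect_add_le_le_of_lipschitz hn D hD hs

theorem card_hWt_eq (n k : ℕ) : Nat.card {x : Fin n → Bool // hWt x = k} = n.choose k := by
  let e : {x : Fin n → Bool // hWt x = k} ≃ {s : Finset (Fin n) // #s = k} :=
    { toFun := fun x => ⟨({i | x.1 i = true} : Finset (Fin n)), x.2⟩
      invFun := fun s => ⟨fun i => decide (i ∈ s.1), by simpa [hWt] using s.2⟩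
      left_inv := fun x => by ext; simp
      right_inv := fun s => by ext; simp }
  rw [Nat.card_congr e, Nat.card_eq_fintype_card, Fintype.card_finset_len, Fintype.card_fin]

theorem two_pow_le_succ_mul_choose_half (n : ℕ) : 2 ^ n ≤ (n + 1) * n.choose (n / 2) :=
  calc 2 ^ n = ∑ k ∈ range (n + 1), n.choose k := (Nat.sum_range_choose n).symm
    _ ≤ ∑ _k ∈ range (n + 1), n.choose (n / 2) := sum_le_sum fun k _ => Nat.choose_le_middle k n
    _ = (n + 1) * n.choose (n / 2) := by simp

theorem two_pow_div_le_card_hWt_eq_half (n : ℕ) :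
    (2 : ℝ) ^ n / (n + 1) ≤ Nat.card {x : Fin n → Bool // hWt x = n / 2} := by
  rw [card_hWt_eq, div_le_iff₀ (by positivity), mul_comm]
  exact_mod_cast two_pow_le_succ_mul_choose_half n

theorem card_subtype_le_card_subtype_and_add {α : Type*} [Fintype α] (p q : α → Prop)
    (S : Finset α) (hS : ∀ x, p x → ¬q x → x ∈ S) :
    Nat.card {x // p x} ≤ Nat.card {x // p x ∧ q x} + #S := by
  classical
  simp only [Nat.card_eq_fintype_card, Fintype.card_subtype]
  rw [← filter_filter, ← card_filter_add_card_filter_not (s := {x | p x}) q]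
  gcongr
  intro x hx
  simp only [mem_filter, mem_univ, true_and] at hx
  exact hS x hx.1 hx.2

theorem two_pow_mul_exp_le_two_rpow {n : ℕ} (hn : 0 < n) :
    (2 : ℝ) ^ n * exp (-2 * (59 / 1000 * n) ^ 2 / n) ≤ 2 ^ ((99 / 100 : ℝ) * n) := by
  have hexp : -2 * (59 / 1000 * n : ℝ) ^ 2 / n = -(3481 / 500000) * n := by
    field_simp; ring
  rw [hexp, ← rpow_natCast, rpow_def_of_pos two_pos, rpow_def_of_pos two_pos, ← exp_add,
    exp_le_exp]
  nlinarith [log_two_lt_d9, (Nat.cast_pos.2 hn : (0 : ℝ) < n)]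

theorem add_one_le_exp_mul {x : ℝ} (hx : (20000 / 17) ^ 2 ≤ x) :
    x + 1 ≤ exp (17 / 10000 * x) := by
  have h := add_one_le_exp (17 / 20000 * x)
  have hsq : exp (17 / 10000 * x) = exp (17 / 20000 * x) ^ 2 := by
    rw [← exp_nat_mul]; ring_nf
  rw [hsq]
  nlinarith

theorem two_pow_mul_exp_le_two_rpow_mul {n : ℕ} (hn : 10 ^ 7 ≤ n) :
    (2 : ℝ) ^ n * exp (-2 * (33 / 500 * n) ^ 2 / n) ≤
      2 ^ (-(n : ℝ) / 100) * (2 ^ n / (n + 1)) := by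
  have hn' : (10 ^ 7 : ℝ) ≤ n := mod_cast hn
  have hexp : -2 * (33 / 500 * n : ℝ) ^ 2 / n = -(2178 / 250000) * n := by
    field_simp; ring
  have hpoly := add_one_le_exp_mul (x := n) (by linarith)
  rw [hexp, mul_div_assoc', le_div_iff₀ (by positivity), mul_comm (2 ^ (-(n : ℝ) / 100)),
    mul_assoc]
  gcongr
  rw [rpow_def_of_pos two_pos]
  calc exp (-(2178 / 250000) * n) * (n + 1)
      ≤ exp (-(2178 / 250000) * n) * exp (17 / 10000 * n) := by gcongr
    _ ≤ exp (log 2 * (-n / 100)) := by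
      rw [← exp_add, exp_le_exp]
      nlinarith [log_two_lt_d9]

/-- for all sufficiently large even `n` and every `A ⊆ {0,1}^n` with
`|A| ≥ 2^{(99/100)n}`, a uniformly random string `x` of Hamming weight exactly `n/2`
satisfies `∃ a ∈ A, d_H(a,x) ≤ n/8` with probability at least `1 − 2^{−n/100}`. -/
theorem random_half_weight_string_hits_large_set :
    ∃ N : ℕ, ∀ n ≥ N, Even n → ∀ A : Set (Fin n → Bool),
      (2:ℝ) ^ ((99/100 : ℝ) * n) ≤ (Nat.card A : ℝ) →
      (1 - (2:ℝ) ^ (-(n:ℝ)/100)) * (Nat.card {x : Fin n → Bool // hWt x = n/2} : ℝ) ≤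
        (Nat.card {x : Fin n → Bool //
          hWt x = n/2 ∧ ∃ a ∈ A, (hammingDist a x : ℝ) ≤ (n:ℝ)/8} : ℝ) := by
  classical
  refine ⟨10 ^ 7, fun n hn _ A hA => ?_⟩
  have hn0 : 0 < n := lt_of_lt_of_le (by norm_num) hn
  rw [Nat.card_eq_card_toFinset] at hA
  have hA0 : A.toFinset.Nonempty :=
    card_pos.1 (mod_cast (rpow_pos_of_pos two_pos _).trans_le hA)
  have hfar := card_le_infHammingDist_le hn0 hA0 (a := 59 / 1000 * n) (s := 33 / 500 * n)
    (by positivity) (by positivity) ((two_pow_mul_exp_le_two_rpow hn0).trans hA)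
  rw [show 59 / 1000 * (n : ℝ) + 33 / 500 * n = n / 8 by ring] at hfar
  have hsplit := card_subtype_le_card_subtype_and_add (fun x => hWt x = n / 2)
    (fun x => ∃ a ∈ A, (hammingDist a x : ℝ) ≤ n / 8)
    {x | (n : ℝ) / 8 ≤ infHammingDist A.toFinset hA0 x} fun x _ hx => by
      obtain ⟨a, ha, hax⟩ := exists_mem_hammingDist_eq_infHammingDist hA0 x
      refine mem_filter.2 ⟨mem_univ x, le_of_lt ?_⟩
      rw [← hax]
      exact not_le.1 fun h => hx ⟨a, Set.mem_toFinset.1 ha, h⟩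
  have hslice := mul_le_mul_of_nonneg_left (two_pow_div_le_card_hWt_eq_half n)
    (rpow_nonneg zero_le_two (-(n : ℝ) / 100))
  have hbound := two_pow_mul_exp_le_two_rpow_mul hn
  replace hsplit := (Nat.cast_le (α := ℝ)).2 hsplit
  rw [Nat.cast_add] at hsplit
  rw [sub_mul, one_mul]
  linarith
end

section
/- Let 0 ≤ d ≤ n be natural numbers with n ≥ 2, and let V be a linear subspace of F_2^n chosen uniformly at random among all d-dimensional linear subspaces of F_2^n. Then for all distinct nonzero v, w ∈ F_2^n, Pr[v ∈ V and w ∈ V] = ((2^d − 1)(2^d − 2)/2) / ((2^n − 1)(2^n − 2)/2), and moreover Pr[v ∈ V and w ∈ V] ≤ Pr[v ∈ V]·Pr[w ∈ V]. -/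
/-!
The group of linear automorphisms of a finite-dimensional space acts transitively on linearly
independent families of a given length, so the number `N_d(s)` of `d`-dimensional subspaces
containing a linearly independent family `s : Fin k → M` does not depend on `s`. Counting the
pairs `(V, s)` with `dim V = d` and `s` a linearly independent family in `V` in two ways then gives
`N_d(s) · ∏_{i<k} (qⁿ - qⁱ) = N_d · ∏_{i<k} (q^d - qⁱ)`. For `q = 2` and `k = 2` (a pair of
distinct nonzero vectors) this is the stated probability; with `k = 1` it gives
`Pr[v ∈ V] = (2^d - 1)/(2ⁿ - 1)`, and the inequality reduces to
`(2^d - 2)/(2ⁿ - 2) ≤ (2^d - 1)/(2ⁿ - 1)`.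
-/

open Module

theorem Nat.card_sigma_of_card_eq {α : Type*} {β : α → Type*} [Finite α] [∀ a, Finite (β a)]
    {c : ℕ} (h : ∀ a, Nat.card (β a) = c) : Nat.card (Σ a, β a) = Nat.card α * c := by
  have := Fintype.ofFinite α
  simp [Nat.card_sigma, h, Nat.card_eq_fintype_card]

theorem Nat.cast_prod_pow_sub_pow {R : Type*} [CommRing R] {q : ℕ} (hq : 1 ≤ q) (m k : ℕ) :
    ((∏ i : Fin k, (q ^ m - q ^ (i : ℕ)) : ℕ) : R) = ∏ i : Fin k, ((q : R) ^ m - q ^ (i : ℕ)) := by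
  rcases le_or_gt k m with hk | hk
  · rw [Nat.cast_prod]
    refine Finset.prod_congr rfl fun i _ => ?_
    rw [Nat.cast_sub (Nat.pow_le_pow_right hq (by omega)), Nat.cast_pow, Nat.cast_pow]
  · rw [Finset.prod_eq_zero (i := ⟨m, hk⟩) (Finset.mem_univ _) (by simp),
      Finset.prod_eq_zero (i := ⟨m, hk⟩) (Finset.mem_univ _) (by simp)]
    simp

theorem linearIndependent_pair_zmod_two {M : Type*} [AddCommGroup M] [Module (ZMod 2) M]
    {v w : M} : LinearIndependent (ZMod 2) ![v, w] ↔ v ≠ 0 ∧ w ≠ 0 ∧ v ≠ w := by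
  have forall_zmod_two (P : ZMod 2 → Prop) : (∀ a, P a) ↔ P 0 ∧ P 1 := Fin.forall_fin_two
  rw [linearIndependent_fin2, forall_zmod_two]
  simp only [Matrix.cons_val_one, Matrix.cons_val_zero, zero_smul, one_smul]
  tauto

namespace Module.Basis

variable {K M : Type*} [DivisionRing K] [AddCommGroup M] [Module K M]

theorem sumExtend_inl {ι : Type*} {f : ι → M} (hf : LinearIndependent K f) (i : ι) :
    sumExtend hf (.inl i) = f i := by
  rw [sumExtend, reindex_apply, extend_apply_self]
  rfl

end Module.Basis

section

variable {K M : Type*} [DivisionRing K] [AddCommGroup M] [Module K M]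

theorem LinearIndependent.exists_linearEquiv_comp_eq [FiniteDimensional K M] {ι : Type*}
    {f g : ι → M} (hf : LinearIndependent K f) (hg : LinearIndependent K g) :
    ∃ e : M ≃ₗ[K] M, e ∘ f = g := by
  have := Module.Finite.finite_basis (Basis.sumExtend hf)
  have := Module.Finite.finite_basis (Basis.sumExtend hg)
  have := Finite.sum_left (α := ι) (Basis.sumExtendIndex hf)
  have := Finite.sum_right (β := Basis.sumExtendIndex hf) ι
  have := Finite.sum_right (β := Basis.sumExtendIndex hg) ι
  have hcard : Nat.card (ι ⊕ Basis.sumExtendIndex hf) = Nat.card (ι ⊕ Basis.sumExtendIndex hg) :=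
    Nat.card_congr ((Basis.sumExtend hf).indexEquiv (Basis.sumExtend hg))
  rw [Nat.card_sum, Nat.card_sum, Nat.add_left_cancel_iff] at hcard
  obtain ⟨c⟩ := Finite.card_eq.mp hcard
  refine ⟨(Basis.sumExtend hf).equiv (Basis.sumExtend hg) ((Equiv.refl ι).sumCongr c), ?_⟩
  ext i
  simp [← Basis.sumExtend_inl hf, ← Basis.sumExtend_inl hg]

theorem Submodule.exists_finrank_eq [FiniteDimensional K M] {d : ℕ} (hd : d ≤ finrank K M) :
    ∃ V : Submodule K M, finrank K V = d := by
  obtain ⟨f, hf⟩ := exists_linearIndependent_of_le_finrank hd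
  exact ⟨Submodule.span K (Set.range f), by rw [finrank_span_eq_card hf, Fintype.card_fin]⟩

theorem card_submodule_finrank_eq_forall_mem_congr [FiniteDimensional K M] {ι : Type*}
    {f g : ι → M} (hf : LinearIndependent K f) (hg : LinearIndependent K g) (d : ℕ) :
    Nat.card {V : Submodule K M // finrank K V = d ∧ ∀ i, f i ∈ V} =
      Nat.card {V : Submodule K M // finrank K V = d ∧ ∀ i, g i ∈ V} := by
  obtain ⟨e, he⟩ := hf.exists_linearEquiv_comp_eq hg
  refine Nat.card_congr ((Submodule.orderIsoMapComap e).toEquiv.subtypeEquiv fun V => ?_)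
  change _ ↔ finrank K (V.map (e : M →ₗ[K] M)) = d ∧ ∀ i, g i ∈ V.map (e : M →ₗ[K] M)
  simp only [LinearEquiv.finrank_map_eq, Submodule.mem_map_equiv, ← he, Function.comp_apply,
    LinearEquiv.symm_apply_apply]

end

section FiniteField

variable {K M : Type*} [DivisionRing K] [Fintype K] [AddCommGroup M] [Module K M] [Finite M]

local notation "q" => Fintype.card K

theorem card_linearIndependent_eq_prod (k : ℕ) :
    Nat.card {s : Fin k → M // LinearIndependent K s} =
      ∏ i : Fin k, (q ^ finrank K M - q ^ (i : ℕ)) := by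
  rcases le_or_gt k (finrank K M) with hk | hk
  · exact card_linearIndependent hk
  · have : IsEmpty {s : Fin k → M // LinearIndependent K s} :=
      ⟨fun s => absurd s.2.fintype_card_le_finrank (by simpa using hk)⟩
    rw [Nat.card_of_isEmpty, Finset.prod_eq_zero (i := ⟨_, hk⟩) (Finset.mem_univ _) (by simp)]

theorem card_linearIndependent_forall_mem (V : Submodule K M) (k : ℕ) :
    Nat.card {s : Fin k → M // LinearIndependent K s ∧ ∀ i, s i ∈ V} =
      ∏ i : Fin k, (q ^ finrank K V - q ^ (i : ℕ)) := by
  rw [← card_linearIndependent_eq_prod]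
  refine Nat.card_congr
    { toFun := fun s => ⟨fun i => ⟨s.1 i, s.2.2 i⟩, ?_⟩
      invFun := fun s => ⟨fun i => s.1 i, ?_, fun i => (s.1 i).2⟩
      left_inv := fun s => rfl
      right_inv := fun s => rfl }
  · exact .of_comp V.subtype s.2.1
  · exact s.2.map' V.subtype V.ker_subtype

theorem card_submodule_finrank_eq_forall_mem_mul {k : ℕ} {f : Fin k → M}
    (hf : LinearIndependent K f) (d : ℕ) :
    Nat.card {V : Submodule K M // finrank K V = d ∧ ∀ i, f i ∈ V} *
        ∏ i : Fin k, (q ^ finrank K M - q ^ (i : ℕ)) =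
      Nat.card {V : Submodule K M // finrank K V = d} *
        ∏ i : Fin k, (q ^ d - q ^ (i : ℕ)) := by
  have e : (Σ V : {V : Submodule K M // finrank K V = d},
        {s : Fin k → M // LinearIndependent K s ∧ ∀ i, s i ∈ V.1}) ≃
      Σ s : {s : Fin k → M // LinearIndependent K s},
        {V : Submodule K M // finrank K V = d ∧ ∀ i, s.1 i ∈ V} :=
    { toFun := fun p => ⟨⟨p.2.1, p.2.2.1⟩, ⟨p.1.1, p.1.2, p.2.2.2⟩⟩
      invFun := fun p => ⟨⟨p.2.1, p.2.2.1⟩, ⟨p.1.1, p.1.2, p.2.2.2⟩⟩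
      left_inv := fun p => rfl
      right_inv := fun p => rfl }
  have := (Nat.card_sigma_of_card_eq fun V : {V : Submodule K M // finrank K V = d} =>
      (card_linearIndependent_forall_mem V.1 k).trans (by rw [V.2])).symm.trans
    ((Nat.card_congr e).trans
      (Nat.card_sigma_of_card_eq fun s => card_submodule_finrank_eq_forall_mem_congr s.2 hf d))
  rw [card_linearIndependent_eq_prod] at this
  rw [this, mul_comm]

theorem card_submodule_finrank_eq_forall_mem_div_card {k : ℕ} {f : Fin k → M}
    (hf : LinearIndependent K f) {d : ℕ} (hd : d ≤ finrank K M) :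
    (Nat.card {V : Submodule K M // finrank K V = d ∧ ∀ i, f i ∈ V} : ℝ) /
        Nat.card {V : Submodule K M // finrank K V = d} =
      ∏ i : Fin k, (((q : ℝ) ^ d - q ^ (i : ℕ)) / ((q : ℝ) ^ finrank K M - q ^ (i : ℕ))) := by
  have hq : 1 < q := Fintype.one_lt_card
  have hk : k ≤ finrank K M := by simpa using hf.fintype_card_le_finrank
  have hden : ∏ i : Fin k, ((q : ℝ) ^ finrank K M - q ^ (i : ℕ)) ≠ 0 :=
    Finset.prod_ne_zero_iff.2 fun i _ => sub_ne_zero.2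
      (pow_lt_pow_right₀ (by exact_mod_cast hq) (i.2.trans_le hk)).ne'
  have hN : (Nat.card {V : Submodule K M // finrank K V = d} : ℝ) ≠ 0 := by
    obtain ⟨V, hV⟩ := Submodule.exists_finrank_eq hd
    have : Nonempty {V : Submodule K M // finrank K V = d} := ⟨⟨V, hV⟩⟩
    exact_mod_cast Nat.card_pos.ne'
  rw [Finset.prod_div_distrib, div_eq_div_iff hN hden, ← Nat.cast_prod_pow_sub_pow hq.le,
    ← Nat.cast_prod_pow_sub_pow hq.le]
  exact_mod_cast (card_submodule_finrank_eq_forall_mem_mul hf d).trans (mul_comm _ _)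

end FiniteField

/-- for a uniformly random `d`-dimensional linear subspace `V` of
`F_2^n` and fixed distinct nonzero `v, w`,
`Pr[v ∈ V ∧ w ∈ V] = ((2^d−1)(2^d−2)/2) / ((2^n−1)(2^n−2)/2)`, and this is at
most `Pr[v ∈ V]·Pr[w ∈ V]`. -/
theorem random_subspace_contains_pair_prob
    {n d : ℕ} (hn : 2 ≤ n) (hd : d ≤ n) (v w : Fin n → ZMod 2)
    (hv : v ≠ 0) (hw : w ≠ 0) (hvw : v ≠ w) :
    (Nat.card {V : Submodule (ZMod 2) (Fin n → ZMod 2) //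
        Module.finrank (ZMod 2) V = d ∧ v ∈ V ∧ w ∈ V} : ℝ) /
      (Nat.card {V : Submodule (ZMod 2) (Fin n → ZMod 2) //
        Module.finrank (ZMod 2) V = d} : ℝ)
    = (((2:ℝ)^d - 1) * ((2:ℝ)^d - 2) / 2) / (((2:ℝ)^n - 1) * ((2:ℝ)^n - 2) / 2) ∧
    (Nat.card {V : Submodule (ZMod 2) (Fin n → ZMod 2) //
        Module.finrank (ZMod 2) V = d ∧ v ∈ V ∧ w ∈ V} : ℝ) /
      (Nat.card {V : Submodule (ZMod 2) (Fin n → ZMod 2) //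
        Module.finrank (ZMod 2) V = d} : ℝ)
    ≤ ((Nat.card {V : Submodule (ZMod 2) (Fin n → ZMod 2) //
          Module.finrank (ZMod 2) V = d ∧ v ∈ V} : ℝ) /
        (Nat.card {V : Submodule (ZMod 2) (Fin n → ZMod 2) //
          Module.finrank (ZMod 2) V = d} : ℝ)) *
      ((Nat.card {V : Submodule (ZMod 2) (Fin n → ZMod 2) //
          Module.finrank (ZMod 2) V = d ∧ w ∈ V} : ℝ) /
        (Nat.card {V : Submodule (ZMod 2) (Fin n → ZMod 2) //
          Module.finrank (ZMod 2) V = d} : ℝ)) := by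
  have hd' : d ≤ finrank (ZMod 2) (Fin n → ZMod 2) := by simpa using hd
  have hpair := card_submodule_finrank_eq_forall_mem_div_card
    (linearIndependent_pair_zmod_two.2 ⟨hv, hw, hvw⟩) hd'
  have hsingle (u : Fin n → ZMod 2) (hu : u ≠ 0) := card_submodule_finrank_eq_forall_mem_div_card
    (linearIndependent_unique_iff.2 hu : LinearIndependent (ZMod 2) ![u]) hd'
  simp only [Fin.forall_fin_two, Fin.forall_fin_one, Fin.prod_univ_two, Fin.prod_univ_one,
    Matrix.cons_val_zero, Matrix.cons_val_one, ZMod.card, Nat.cast_ofNat, finrank_fin_fun,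
    Fin.val_zero, Fin.val_one, pow_zero, pow_one] at hpair hsingle
  rw [hpair, hsingle v hv, hsingle w hw, div_div_div_cancel_right₀ two_ne_zero, mul_div_mul_comm]
  have hx : (1 : ℝ) ≤ 2 ^ d := one_le_pow₀ one_le_two
  have hxy : (2 : ℝ) ^ d ≤ 2 ^ n := pow_le_pow_right₀ one_le_two hd
  have hy : (2 : ℝ) ^ 2 ≤ 2 ^ n := pow_le_pow_right₀ one_le_two hn
  refine ⟨rfl, mul_le_mul_of_nonneg_left ?_ (div_nonneg (by linarith) (by linarith))⟩
  rw [div_le_div_iff₀ (by linarith) (by linarith)]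
  linarith
end

section
/- Let ε ∈ (0,1/2) be a real number. For all sufficiently large n (depending on ε) the following holds: let B ⊆ F_2^n have density β = |B|/2^n ≥ 2^{−(1/2−ε)n}, and let a be chosen uniformly at random among the vectors of F_2^n of odd Hamming weight. Then Pr_a[ (1 − 2^{−εn/4})·β ≤ |(B − a) ∩ a^⊥| / 2^{n−1} ≤ (1 + 2^{−εn/4})·β ] ≥ 1 − (1/2)·2^{−εn/4}, where B − a = {b + a : b ∈ B} and a^⊥ = {x ∈ F_2^n : Σ_i a_i x_i = 0}. -/
open Finset

/-- The standard bilinear form (inner product) on `F_2^n`. -/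
def dotp {n : ℕ} (a x : Fin n → ZMod 2) : ZMod 2 := ∑ i, a i * x i

lemma dotp_add_right {n : ℕ} (a x y : Fin n → ZMod 2) :
    dotp a (x + y) = dotp a x + dotp a y := by
  simp [dotp, mul_add, Finset.sum_add_distrib]

lemma dotp_smul_right {n : ℕ} (a : Fin n → ZMod 2) (c : ZMod 2) (x : Fin n → ZMod 2) :
    dotp a (c • x) = c * dotp a x := by
  simp [dotp, Finset.mul_sum, mul_left_comm]

/-- The orthogonal complement of a single vector `a`:
`a^⊥ = {x : ⟨a,x⟩ = 0}`, as a subspace of `F_2^n`. -/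
def perpVec {n : ℕ} (a : Fin n → ZMod 2) : Submodule (ZMod 2) (Fin n → ZMod 2) where
  carrier := {x | dotp a x = 0}
  add_mem' := by
    intro x y hx hy
    simp only [Set.mem_setOf_eq] at *
    rw [dotp_add_right, hx, hy, add_zero]
  zero_mem' := by simp [dotp]
  smul_mem' := by
    intro c x hx
    simp only [Set.mem_setOf_eq] at *
    rw [dotp_smul_right, hx, mul_zero]

/-- The Hamming weight of a vector in `F_2^n`. -/
def wtZ {n : ℕ} (a : Fin n → ZMod 2) : ℕ := (Finset.univ.filter fun i => a i = 1).card

/- ## Auxiliary lemmas -/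

noncomputable def chi (t : ZMod 2) : ℝ := if t = 0 then 1 else -1

lemma chi_zero : chi 0 = 1 := by simp [chi]
lemma chi_one : chi 1 = -1 := by norm_num [chi]
lemma chi_add (s t : ZMod 2) : chi (s + t) = chi s * chi t := by
  have h2 : ∀ t : ZMod 2, t = 0 ∨ t = 1 := by decide
  rcases h2 s with hs | hs <;> rcases h2 t with ht | ht <;> subst hs <;> subst ht <;>
    first
      | (rw [show ((1:ZMod 2)+1) = 0 by decide, chi_zero, chi_one]; ring)
      | simp [chi_zero, chi_one]

lemma dotp_add_left {n : ℕ} (a e x : Fin n → ZMod 2) :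
    dotp (a + e) x = dotp a x + dotp e x := by
  simp [dotp, add_mul, Finset.sum_add_distrib]

lemma dotp_single {n : ℕ} (i : Fin n) (c : Fin n → ZMod 2) :
    dotp (Pi.single i 1) c = c i := by
  rw [dotp, Finset.sum_eq_single i]
  · simp
  · intro j _ hj; simp [Pi.single_eq_of_ne hj]
  · simp

lemma sum_chi_ne {n : ℕ} {c : Fin n → ZMod 2} (hc : c ≠ 0) :
    ∑ a : Fin n → ZMod 2, chi (dotp a c) = 0 := by
  obtain ⟨i, hi⟩ : ∃ i, c i ≠ 0 := by
    by_contra h; push_neg at h; exact hc (funext h)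
  have hci : c i = 1 := by
    have : ∀ t : ZMod 2, t ≠ 0 → t = 1 := by decide
    exact this _ hi
  have key : ∑ a : Fin n → ZMod 2, chi (dotp a c)
      = ∑ a : Fin n → ZMod 2, chi (dotp (a + Pi.single i 1) c) :=
    (Fintype.sum_equiv (Equiv.addRight (Pi.single i 1)) _ _ (fun a => rfl)).symm
  have key2 : ∑ a : Fin n → ZMod 2, chi (dotp (a + Pi.single i 1) c)
      = - ∑ a : Fin n → ZMod 2, chi (dotp a c) := by
    rw [← Finset.sum_neg_distrib]
    refine Finset.sum_congr rfl fun a _ => ?_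
    rw [dotp_add_left, dotp_single, hci, chi_add, chi_one]; ring
  linarith [key, key2]

lemma sum_chi {n : ℕ} (c : Fin n → ZMod 2) :
    ∑ a : Fin n → ZMod 2, chi (dotp a c) = if c = 0 then (2:ℝ)^n else 0 := by
  split
  · next h =>
    subst h
    have : ∀ a : Fin n → ZMod 2, dotp a 0 = 0 := by intro a; simp [dotp]
    simp only [this, chi_zero]
    simp [Finset.card_univ]
  · next h => exact sum_chi_ne h

lemma wt_cast {n : ℕ} (a : Fin n → ZMod 2) : ((wtZ a : ℕ) : ZMod 2) = ∑ i, a i := by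
  classical
  have h : ∀ i, a i = if a i = 1 then (1 : ZMod 2) else 0 := by
    intro i
    have : ∀ t : ZMod 2, t = if t = 1 then (1:ZMod 2) else 0 := by decide
    exact this _
  calc ((wtZ a : ℕ) : ZMod 2) = ∑ i, if a i = 1 then (1:ZMod 2) else 0 := by
        rw [Finset.sum_boole]; rfl
    _ = ∑ i, a i := by exact Finset.sum_congr rfl fun i _ => (h i).symm

lemma dotp_ones {n : ℕ} (a : Fin n → ZMod 2) :
    dotp a (fun _ => 1) = ((wtZ a : ℕ) : ZMod 2) := by
  rw [wt_cast, dotp]; simp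

lemma odd_iff_cast (m : ℕ) : Odd m ↔ ((m : ℕ) : ZMod 2) = 1 := by
  have hm : ((m : ℕ) : ZMod 2) = ((m % 2 : ℕ) : ZMod 2) := by
    conv_lhs => rw [← Nat.mod_add_div m 2]
    push_cast
    rw [show ((2:ZMod 2)) = 0 from by decide]
    ring
  rw [Nat.odd_iff, hm]
  rcases Nat.mod_two_eq_zero_or_one m with h | h <;> rw [h] <;> simp

lemma odd_iff_dotp {n : ℕ} (a : Fin n → ZMod 2) :
    Odd (wtZ a) ↔ dotp a (fun _ => 1) = 1 := by
  rw [dotp_ones, odd_iff_cast]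

lemma dotp_self_of_odd {n : ℕ} {a : Fin n → ZMod 2} (h : Odd (wtZ a)) :
    dotp a a = 1 := by
  have hsq : ∀ t : ZMod 2, t * t = t := by decide
  have : dotp a a = dotp a (fun _ => 1) := by
    rw [dotp, dotp]
    exact Finset.sum_congr rfl fun i _ => by rw [hsq, mul_one]
  rw [this]; exact (odd_iff_dotp a).1 h

lemma sum_odd_eq {n : ℕ} (F : (Fin n → ZMod 2) → ℝ)
    [DecidablePred fun a : Fin n → ZMod 2 => Odd (wtZ a)] :
    ∑ a ∈ univ.filter (fun a : Fin n → ZMod 2 => Odd (wtZ a)), F a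
      = ∑ a : Fin n → ZMod 2, F a * ((1 - chi (dotp a (fun _ => 1)))/2) := by
  rw [Finset.sum_filter]
  refine Finset.sum_congr rfl fun a _ => ?_
  by_cases h : Odd (wtZ a)
  · rw [if_pos h, (odd_iff_dotp a).1 h, chi_one]; ring
  · rw [if_neg h]
    have hne : dotp a (fun _ => 1) ≠ 1 := fun hc => h ((odd_iff_dotp a).2 hc)
    have h0 : dotp a (fun _ => 1) = 0 := by
      have : ∀ t : ZMod 2, t ≠ 1 → t = 0 := by decide
      exact this _ hne
    rw [h0, chi_zero]; ring

lemma ones_ne_zero {n : ℕ} (hn : 1 ≤ n) : (fun _ : Fin n => (1 : ZMod 2)) ≠ 0 := by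
  intro h
  have := congrFun h ⟨0, hn⟩
  simpa using this

lemma card_odd {n : ℕ} (hn : 1 ≤ n)
    [DecidablePred fun a : Fin n → ZMod 2 => Odd (wtZ a)] :
    ((univ.filter (fun a : Fin n → ZMod 2 => Odd (wtZ a))).card : ℝ) = 2^n / 2 := by
  have h := sum_odd_eq (n := n) (fun _ => (1:ℝ))
  rw [Finset.sum_const, nsmul_eq_mul, mul_one] at h
  have h2 : ∑ a : Fin n → ZMod 2, (1:ℝ) * ((1 - chi (dotp a (fun _ => 1)))/2)
      = ((Fintype.card (Fin n → ZMod 2) : ℝ) - ∑ a : Fin n → ZMod 2, chi (dotp a (fun _ => 1)))/2 := by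
    simp only [one_mul]
    rw [← Finset.sum_div, Finset.sum_sub_distrib, Finset.sum_const, Finset.card_univ]
    simp
  rw [h, h2, sum_chi, if_neg (ones_ne_zero hn)]
  have hc : (Fintype.card (Fin n → ZMod 2) : ℝ) = 2^n := by
    simp [Fintype.card_pi]
  rw [hc]; ring

lemma sum_odd_chi {n : ℕ} (c : Fin n → ZMod 2)
    [DecidablePred fun a : Fin n → ZMod 2 => Odd (wtZ a)] :
    ∑ a ∈ univ.filter (fun a : Fin n → ZMod 2 => Odd (wtZ a)), chi (dotp a c)
      = ((if c = 0 then (2:ℝ)^n else 0) - (if c + (fun _ => 1) = 0 then (2:ℝ)^n else 0))/2 := by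
  rw [sum_odd_eq]
  have hpt : ∀ a : Fin n → ZMod 2, chi (dotp a c) * ((1 - chi (dotp a (fun _ => 1)))/2)
      = (chi (dotp a c) - chi (dotp a (c + fun _ => 1)))/2 := by
    intro a
    rw [dotp_add_right, chi_add]; ring
  simp only [hpt]
  rw [← Finset.sum_div, Finset.sum_sub_distrib, sum_chi, sum_chi]

lemma sum_odd_chi_le {n : ℕ} (c : Fin n → ZMod 2)
    [DecidablePred fun a : Fin n → ZMod 2 => Odd (wtZ a)] :
    ∑ a ∈ univ.filter (fun a : Fin n → ZMod 2 => Odd (wtZ a)), chi (dotp a c)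
      ≤ (if c = 0 then (2:ℝ)^n else 0)/2 := by
  rw [sum_odd_chi]
  have h1 : (0:ℝ) ≤ (if c + (fun _ => 1) = 0 then (2:ℝ)^n else 0) := by positivity
  linarith

lemma add_self_zed {n : ℕ} (b : Fin n → ZMod 2) : b + b = 0 := by
  funext i
  have : ∀ t : ZMod 2, t + t = 0 := by decide
  exact this _

lemma second_moment {n : ℕ} (S : Finset (Fin n → ZMod 2))
    [DecidablePred fun a : Fin n → ZMod 2 => Odd (wtZ a)] :
    ∑ a ∈ univ.filter (fun a : Fin n → ZMod 2 => Odd (wtZ a)),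
        (∑ b ∈ S, chi (dotp a b))^2 ≤ (2:ℝ)^n / 2 * S.card := by
  classical
  have step1 : ∀ a : Fin n → ZMod 2, (∑ b ∈ S, chi (dotp a b))^2
      = ∑ b ∈ S, ∑ b' ∈ S, chi (dotp a (b + b')) := by
    intro a
    rw [sq, Finset.sum_mul_sum]
    exact Finset.sum_congr rfl fun b _ => Finset.sum_congr rfl fun b' _ => by
      rw [dotp_add_right, chi_add]
  simp only [step1]
  rw [Finset.sum_comm]
  have hadd : ∀ b b' : Fin n → ZMod 2, b + b' = 0 ↔ b' = b := by
    intro b b'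
    constructor
    · intro h
      have : b + (b + b') = b + 0 := by rw [h]
      rwa [← add_assoc, add_self_zed, zero_add, add_zero] at this
    · intro h; rw [h, add_self_zed]
  calc ∑ b ∈ S, ∑ a ∈ univ.filter (fun a : Fin n → ZMod 2 => Odd (wtZ a)),
          ∑ b' ∈ S, chi (dotp a (b + b'))
      ≤ ∑ b ∈ S, (2:ℝ)^n / 2 := by
        refine Finset.sum_le_sum fun b _ => ?_
        rw [Finset.sum_comm]
        calc ∑ b' ∈ S, ∑ a ∈ univ.filter (fun a : Fin n → ZMod 2 => Odd (wtZ a)),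
                chi (dotp a (b + b'))
            ≤ ∑ b' ∈ S, (if b' = b then (2:ℝ)^n / 2 else 0) := by
              refine Finset.sum_le_sum fun b' _ => ?_
              refine (sum_odd_chi_le (b + b')).trans ?_
              by_cases h : b + b' = 0
              · rw [if_pos h, if_pos ((hadd b b').1 h)]
              · rw [if_neg h, if_neg (fun hc => h ((hadd b b').2 hc))]
                simp
          _ ≤ (2:ℝ)^n / 2 := by
              rw [Finset.sum_ite_eq' S b]
              split <;> simp
    _ = (2:ℝ)^n / 2 * S.card := by
        rw [Finset.sum_const, nsmul_eq_mul]; ring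

lemma mem_perp {n : ℕ} (a x : Fin n → ZMod 2) : x ∈ perpVec a ↔ dotp a x = 0 := Iff.rfl

lemma ncard_filter {α : Type*} [Fintype α] (p : α → Prop) [DecidablePred p] :
    Nat.card {x // p x} = (Finset.univ.filter p).card := by
  rw [Nat.card_eq_fintype_card, Fintype.card_subtype]

lemma count_shift {n : ℕ} (B : Set (Fin n → ZMod 2)) (a : Fin n → ZMod 2)
    (ha : dotp a a = 1) :
    Nat.card {x : Fin n → ZMod 2 // (∃ b ∈ B, x = b + a) ∧ x ∈ perpVec a}
      = Nat.card {b : Fin n → ZMod 2 // b ∈ B ∧ dotp a b = 1} := by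
  classical
  apply Nat.card_congr
  have hone : ∀ t : ZMod 2, t + 1 = 0 ↔ t = 1 := by decide
  refine ⟨fun ⟨x, hx⟩ => ⟨x + a, ?_, ?_⟩, fun ⟨b, hb⟩ => ⟨b + a, ?_, ?_⟩, ?_, ?_⟩
  · obtain ⟨⟨b, hbB, rfl⟩, _⟩ := hx
    rwa [add_assoc, add_self_zed, add_zero]
  · obtain ⟨⟨b, hbB, rfl⟩, hperp⟩ := hx
    rw [mem_perp, dotp_add_right, ha, hone] at hperp
    rw [add_assoc, add_self_zed, add_zero, hperp]
  · exact ⟨b, hb.1, rfl⟩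
  · rw [mem_perp, dotp_add_right, ha, hb.2]
    decide
  · rintro ⟨x, hx⟩
    simp [add_assoc, add_self_zed]
  · rintro ⟨b, hb⟩
    simp [add_assoc, add_self_zed]

lemma count_to_filter {n : ℕ} (B : Set (Fin n → ZMod 2)) (a : Fin n → ZMod 2)
    [DecidablePred (· ∈ B)] [∀ b, Decidable (dotp a b = 1)] :
    Nat.card {b : Fin n → ZMod 2 // b ∈ B ∧ dotp a b = 1}
      = ((univ.filter (· ∈ B)).filter (fun b => dotp a b = 1)).card := by
  rw [ncard_filter, Finset.filter_filter]

lemma ncard_set {n : ℕ} (B : Set (Fin n → ZMod 2)) [DecidablePred (· ∈ B)] :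
    (Nat.card B : ℕ) = (univ.filter (· ∈ B)).card := by
  rw [← ncard_filter]

lemma filter_card_chi {n : ℕ} (S : Finset (Fin n → ZMod 2)) (a : Fin n → ZMod 2)
    [∀ b, Decidable (dotp a b = 1)] :
    ((S.filter (fun b => dotp a b = 1)).card : ℝ)
      = ((S.card : ℝ) - ∑ b ∈ S, chi (dotp a b))/2 := by
  rw [← Finset.sum_boole]
  have hpt : ∀ b : Fin n → ZMod 2, (if dotp a b = 1 then (1:ℝ) else 0)
      = (1 - chi (dotp a b))/2 := by
    intro b
    by_cases h : dotp a b = 1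
    · rw [if_pos h, h, chi_one]; norm_num
    · have h0 : dotp a b = 0 := by
        have : ∀ t : ZMod 2, t ≠ 1 → t = 0 := by decide
        exact this _ h
      rw [if_neg h, h0, chi_zero]; norm_num
  simp only [hpt]
  rw [← Finset.sum_div, Finset.sum_sub_distrib, Finset.sum_const, nsmul_eq_mul, mul_one]

/-- for `ε ∈ (0,1/2)` and all sufficiently large `n`: if
`B ⊆ F_2^n` has density `β ≥ 2^{−(1/2−ε)n}` and `a` is uniform among odd
Hamming-weight vectors, then with probability at least `1 − (1/2)·2^{−εn/4}`,
`|(B − a) ∩ a^⊥| / 2^{n−1} ∈ (1 ± 2^{−εn/4})·β`. -/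
theorem random_odd_shift_samples_density
    {ε : ℝ} (hε0 : 0 < ε) (hε : ε < 1/2) :
    ∃ N : ℕ, ∀ n ≥ N, ∀ B : Set (Fin n → ZMod 2),
      (2:ℝ) ^ (-((1/2 - ε) * n)) ≤ (Nat.card B : ℝ) / 2^n →
      (1 - (1/2) * (2:ℝ) ^ (-(ε * n / 4))) *
          (Nat.card {a : Fin n → ZMod 2 // Odd (wtZ a)} : ℝ)
        ≤ (Nat.card {a : Fin n → ZMod 2 // Odd (wtZ a) ∧
            (1 - (2:ℝ) ^ (-(ε * n / 4))) * ((Nat.card B : ℝ) / 2^n) ≤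
              (Nat.card {x : Fin n → ZMod 2 //
                (∃ b ∈ B, x = b + a) ∧ x ∈ perpVec a} : ℝ) / 2^(n-1) ∧
            (Nat.card {x : Fin n → ZMod 2 //
                (∃ b ∈ B, x = b + a) ∧ x ∈ perpVec a} : ℝ) / 2^(n-1) ≤
              (1 + (2:ℝ) ^ (-(ε * n / 4))) * ((Nat.card B : ℝ) / 2^n)} : ℝ) := by
  classical
  refine ⟨2, fun n hn B hB => ?_⟩
  have hn1 : 1 ≤ n := le_trans one_le_two hn
  have hn2 : (2:ℝ) ≤ (n:ℝ) := by exact_mod_cast hn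
  set δ : ℝ := (2:ℝ) ^ (-(ε * (n:ℝ) / 4)) with hδdef
  have hδpos : 0 < δ := Real.rpow_pos_of_pos two_pos _
  have h2npos : (0:ℝ) < 2^n := by positivity
  have hPpos : (0:ℝ) < (2:ℝ)^n/2 := by positivity
  set S : Finset (Fin n → ZMod 2) := univ.filter (· ∈ B) with hSdef
  set m : ℝ := (S.card : ℝ) with hmdef
  have hmB : (Nat.card B : ℝ) = m := by
    rw [hmdef, hSdef]; exact_mod_cast congrArg (Nat.cast : ℕ → ℝ) (ncard_set B)
  -- lower bound on m
  rw [hmB] at hB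
  have hm_lb : (2:ℝ) ^ (((1:ℝ)/2 + ε) * n) ≤ m := by
    have h1 : (2:ℝ) ^ (-((1/2 - ε) * (n:ℝ))) * 2^n ≤ m := (le_div_iff₀ h2npos).mp hB
    have h2 : (2:ℝ) ^ (-((1/2 - ε) * (n:ℝ))) * 2^n = (2:ℝ) ^ (((1:ℝ)/2 + ε) * (n:ℝ)) := by
      rw [← Real.rpow_natCast 2 n, ← Real.rpow_add two_pos]
      congr 1; ring
    linarith [h2 ▸ h1]
  have hm0 : (0:ℝ) < m := lt_of_lt_of_le (Real.rpow_pos_of_pos two_pos _) hm_lb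
  -- key numeric inequality
  have h2δm : (2:ℝ) ≤ δ^3 * m := by
    have hδ3 : δ^3 = (2:ℝ) ^ (-(3 * ε * (n:ℝ) / 4)) := by
      rw [hδdef, ← Real.rpow_natCast ((2:ℝ) ^ (-(ε * (n:ℝ) / 4))) 3,
        ← Real.rpow_mul (le_of_lt two_pos)]
      congr 1; push_cast; ring
    have h1 : (2:ℝ) ^ (-(3 * ε * (n:ℝ) / 4)) * (2:ℝ) ^ (((1:ℝ)/2 + ε) * n) ≤ δ^3 * m := by
      rw [hδ3]
      exact mul_le_mul_of_nonneg_left hm_lb (le_of_lt (Real.rpow_pos_of_pos two_pos _))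
    have h2 : (2:ℝ) ^ (-(3 * ε * (n:ℝ) / 4)) * (2:ℝ) ^ (((1:ℝ)/2 + ε) * n)
        = (2:ℝ) ^ (((1:ℝ)/2 + ε/4) * n) := by
      rw [← Real.rpow_add two_pos]; congr 1; ring
    have h3 : (2:ℝ) ^ ((1:ℝ)) ≤ (2:ℝ) ^ (((1:ℝ)/2 + ε/4) * n) := by
      apply Real.rpow_le_rpow_of_exponent_le one_le_two
      nlinarith
    rw [Real.rpow_one] at h3
    linarith [h1, h2 ▸ h3]
  -- Chebyshev
  set Ω : Finset (Fin n → ZMod 2) := univ.filter (fun a => Odd (wtZ a)) with hΩdef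
  have hΩcard : (Ω.card : ℝ) = 2^n/2 := by rw [hΩdef]; exact card_odd hn1
  have hsm : ∑ a ∈ Ω, (∑ b ∈ S, chi (dotp a b))^2 ≤ (2:ℝ)^n / 2 * m := by
    rw [hΩdef, hmdef]; exact second_moment S
  clear_value δ S m Ω
  set Bad : Finset (Fin n → ZMod 2) :=
    Ω.filter (fun a => ¬ (|∑ b ∈ S, chi (dotp a b)| ≤ δ * m)) with hBaddef
  set GoodT : Finset (Fin n → ZMod 2) :=
    Ω.filter (fun a => |∑ b ∈ S, chi (dotp a b)| ≤ δ * m) with hGoodTdef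
  clear_value Bad GoodT
  have hBadsub : Bad ⊆ Ω := by rw [hBaddef]; exact Finset.filter_subset _ _
  have hBadbound : (Bad.card : ℝ) * (δ*m)^2 ≤ (2:ℝ)^n/2 * m := by
    have h1 : ∀ a ∈ Bad, (δ*m)^2 ≤ (∑ b ∈ S, chi (dotp a b))^2 := by
      intro a ha
      rw [hBaddef, Finset.mem_filter] at ha
      have h2 : δ * m < |∑ b ∈ S, chi (dotp a b)| := not_le.mp ha.2
      calc (δ*m)^2 ≤ |∑ b ∈ S, chi (dotp a b)|^2 := by
            apply pow_le_pow_left₀ (by positivity) h2.le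
        _ = (∑ b ∈ S, chi (dotp a b))^2 := sq_abs _
    have h2 := Finset.sum_le_sum h1
    rw [Finset.sum_const, nsmul_eq_mul] at h2
    have h3 : ∑ a ∈ Bad, (∑ b ∈ S, chi (dotp a b))^2
        ≤ ∑ a ∈ Ω, (∑ b ∈ S, chi (dotp a b))^2 :=
      Finset.sum_le_sum_of_subset_of_nonneg hBadsub (fun a _ _ => sq_nonneg _)
    linarith
  have hBadcard : (Bad.card : ℝ) ≤ δ/2 * ((2:ℝ)^n/2) := by
    have hhint := mul_le_mul_of_nonneg_left h2δm (le_of_lt (mul_pos hPpos hm0))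
    have hsq : (0:ℝ) < (δ*m)^2 := by positivity
    have hstep : (Bad.card:ℝ) ≤ ((2:ℝ)^n/2 * m)/(δ*m)^2 := (le_div_iff₀ hsq).mpr hBadbound
    refine hstep.trans ?_
    rw [div_le_iff₀ hsq]
    nlinarith [hhint]
  have hsplit : GoodT.card + Bad.card = Ω.card := by
    rw [hGoodTdef, hBaddef]
    exact Finset.card_filter_add_card_filter_not _
  -- goal conversion
  rw [ncard_filter, ncard_filter]
  rw [← hΩdef]
  -- membership implication
  have hGood : GoodT ⊆ univ.filter (fun a : Fin n → ZMod 2 => Odd (wtZ a) ∧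
      (1 - δ) * ((Nat.card B : ℝ) / 2^n) ≤
        (Nat.card {x : Fin n → ZMod 2 //
          (∃ b ∈ B, x = b + a) ∧ x ∈ perpVec a} : ℝ) / 2^(n-1) ∧
      (Nat.card {x : Fin n → ZMod 2 //
          (∃ b ∈ B, x = b + a) ∧ x ∈ perpVec a} : ℝ) / 2^(n-1) ≤
        (1 + δ) * ((Nat.card B : ℝ) / 2^n)) := by
    intro a ha
    rw [hGoodTdef, Finset.mem_filter, hΩdef, Finset.mem_filter] at ha
    obtain ⟨⟨-, hodd⟩, habs⟩ := ha
    obtain ⟨hlo, hhi⟩ := abs_le.mp habs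
    rw [Finset.mem_filter]
    refine ⟨Finset.mem_univ _, hodd, ?_⟩
    have hXnat : Nat.card {x : Fin n → ZMod 2 //
        (∃ b ∈ B, x = b + a) ∧ x ∈ perpVec a}
        = (S.filter (fun b => dotp a b = 1)).card := by
      rw [count_shift B a (dotp_self_of_odd hodd), count_to_filter B a, ← hSdef]
    have hXr : (Nat.card {x : Fin n → ZMod 2 //
        (∃ b ∈ B, x = b + a) ∧ x ∈ perpVec a} : ℝ)
        = (m - ∑ b ∈ S, chi (dotp a b))/2 := by
      rw [hXnat, filter_card_chi, ← hmdef]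
    have h2n1 : ((2:ℝ)^(n-1)) = 2^n/2 := by
      rw [eq_div_iff (two_ne_zero), ← pow_succ]
      congr 1
      omega
    rw [hXr, hmB, h2n1]
    have hq : ((m - ∑ b ∈ S, chi (dotp a b))/2)/((2:ℝ)^n/2)
        = (m - ∑ b ∈ S, chi (dotp a b))/2^n := by
      rw [div_div_div_comm]
      simp
    rw [hq]
    clear hXnat hXr hB hsm
    constructor
    · rw [show (1 - δ) * (m / 2^n) = (m - δ*m)/2^n by ring]
      exact div_le_div_of_nonneg_right (by linarith) h2npos.le
    · rw [show (1 + δ) * (m / 2^n) = (m + δ*m)/2^n by ring]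
      exact div_le_div_of_nonneg_right (by linarith) h2npos.le
  -- final chain
  have hcard : (GoodT.card : ℝ) ≤
      ((univ.filter (fun a : Fin n → ZMod 2 => Odd (wtZ a) ∧
      (1 - δ) * ((Nat.card B : ℝ) / 2^n) ≤
        (Nat.card {x : Fin n → ZMod 2 //
          (∃ b ∈ B, x = b + a) ∧ x ∈ perpVec a} : ℝ) / 2^(n-1) ∧
      (Nat.card {x : Fin n → ZMod 2 //
          (∃ b ∈ B, x = b + a) ∧ x ∈ perpVec a} : ℝ) / 2^(n-1) ≤
        (1 + δ) * ((Nat.card B : ℝ) / 2^n))).card : ℝ) := by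
    exact_mod_cast Finset.card_le_card hGood
  have hsplit' : (GoodT.card : ℝ) + (Bad.card : ℝ) = (Ω.card : ℝ) := by
    exact_mod_cast congrArg (Nat.cast : ℕ → ℝ) hsplit
  calc (1 - 1/2 * δ) * (Ω.card : ℝ)
      = (Ω.card : ℝ) - δ/2 * ((2:ℝ)^n/2) := by rw [hΩcard]; ring
    _ ≤ (GoodT.card : ℝ) := by linarith
    _ ≤ _ := hcard
end

section
/- For every real ε ∈ (0,1/2) and every sufficiently large n, the inner-product function IP_n has (2·2^{−εn/4}, ⌊(1/2 − ε)n⌋)-hitting monochromatic rectangle-distributions; that is, for each c ∈ {0,1} there exists a probability distribution σ_c over rectangles U × V with U, V ⊆ F_2^n such that every rectangle in the support of σ_c is c-monochromatic for IP_n, and for every A, B ⊆ F_2^n with |A| ≥ 2^{−⌊(1/2−ε)n⌋}·2^n and |B| ≥ 2^{−⌊(1/2−ε)n⌋}·2^n, Pr_{U×V ∼ σ_c}[(U×V) ∩ (A×B) ≠ ∅] ≥ 1 − 2·2^{−εn/4}. -/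
/-! ### Auxiliary lemmas -/

open Finset

section ZMod2Lemmas

lemma IP_zmod2_cases (a : ZMod 2) : a = 0 ∨ a = 1 := by revert a; decide
lemma IP_zmod2_ne_iff {a t : ZMod 2} : ¬ a = t ↔ a = t + 1 := by revert a t; decide
lemma IP_zmod2_self (a : ZMod 2) : a + a = 0 := by revert a; decide

lemma IP_exists_one {n : ℕ} {x : Fin n → ZMod 2} (hx : x ≠ 0) : ∃ j, x j = 1 := by
  by_contra h; push_neg at h; apply hx; funext j
  rcases IP_zmod2_cases (x j) with h0 | h1
  · exact h0
  · exact absurd h1 (h j)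

lemma IP_dotp_add {n : ℕ} (x v w : Fin n → ZMod 2) :
    dotp x (v + w) = dotp x v + dotp x w := by
  simp [dotp, mul_add, Finset.sum_add_distrib]

lemma IP_dotp_smul {n : ℕ} (x : Fin n → ZMod 2) (c : ZMod 2) (v : Fin n → ZMod 2) :
    dotp x (c • v) = c * dotp x v := by
  simp [dotp, Finset.mul_sum, mul_left_comm]

lemma IP_dotp_single {n : ℕ} (x : Fin n → ZMod 2) (j : Fin n) :
    dotp x (Pi.single j 1) = x j := by
  classical
  simp [dotp, Pi.single_apply, mul_ite]

lemma IP_dotp_single_left {n : ℕ} (j : Fin n) (v : Fin n → ZMod 2) :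
    dotp (Pi.single j 1) v = v j := by
  classical
  simp [dotp, Pi.single_apply, ite_mul]

end ZMod2Lemmas

section Counting

lemma IP_card_shift1 {n : ℕ} (x : Fin n → ZMod 2) (u : Fin n → ZMod 2) (t : ZMod 2) :
    #(univ.filter (fun v : Fin n → ZMod 2 => dotp x v = t)) =
    #(univ.filter (fun v : Fin n → ZMod 2 => dotp x v = t + dotp x u)) := by
  classical
  have hvu : ∀ v : Fin n → ZMod 2, v + u + u = v := by
    intro v; funext j
    show v j + u j + u j = v j
    rw [add_assoc, IP_zmod2_self, add_zero]
  apply Finset.card_bij' (fun v _ => v + u) (fun v _ => v + u)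
  · intro v hv
    simp only [mem_filter, mem_univ, true_and] at hv ⊢
    rw [IP_dotp_add, hv]
  · intro v hv
    simp only [mem_filter, mem_univ, true_and] at hv ⊢
    rw [IP_dotp_add, hv, add_assoc, IP_zmod2_self, add_zero]
  · intro v _; exact hvu v
  · intro v _; exact hvu v

lemma IP_card_dotp_eq {n : ℕ} {x : Fin n → ZMod 2} (hx : x ≠ 0) (t : ZMod 2) :
    2 * #(univ.filter (fun v : Fin n → ZMod 2 => dotp x v = t)) = 2 ^ n := by
  classical
  obtain ⟨j, hj⟩ := IP_exists_one hx
  have hshift := IP_card_shift1 x (Pi.single j 1) t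
  rw [IP_dotp_single, hj] at hshift
  have hpart := Finset.card_filter_add_card_filter_not
    (s := (univ : Finset (Fin n → ZMod 2))) (fun v => dotp x v = t)
  have heq : (univ.filter (fun v : Fin n → ZMod 2 => ¬ dotp x v = t)) =
      (univ.filter (fun v : Fin n → ZMod 2 => dotp x v = t + 1)) := by
    apply Finset.filter_congr; intro v _; exact IP_zmod2_ne_iff
  rw [heq, ← hshift] at hpart
  have hcard : #(univ : Finset (Fin n → ZMod 2)) = 2 ^ n := by
    rw [Finset.card_univ]; simp [Fintype.card_fun]
  omega

lemma IP_card_fiber_shift {n : ℕ} (x y : Fin n → ZMod 2) (u : Fin n → ZMod 2) (t t' : ZMod 2) :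
    #(univ.filter (fun v : Fin n → ZMod 2 => dotp x v = t ∧ dotp y v = t')) =
    #(univ.filter (fun v : Fin n → ZMod 2 =>
        dotp x v = t + dotp x u ∧ dotp y v = t' + dotp y u)) := by
  classical
  have hvu : ∀ v : Fin n → ZMod 2, v + u + u = v := by
    intro v; funext j
    show v j + u j + u j = v j
    rw [add_assoc, IP_zmod2_self, add_zero]
  apply Finset.card_bij' (fun v _ => v + u) (fun v _ => v + u)
  · intro v hv
    simp only [mem_filter, mem_univ, true_and] at hv ⊢
    rw [IP_dotp_add, IP_dotp_add, hv.1, hv.2]; exact ⟨rfl, rfl⟩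
  · intro v hv
    simp only [mem_filter, mem_univ, true_and] at hv ⊢
    rw [IP_dotp_add, IP_dotp_add, hv.1, hv.2,
      add_assoc, IP_zmod2_self, add_zero, add_assoc, IP_zmod2_self, add_zero]
    exact ⟨rfl, rfl⟩
  · intro v _; exact hvu v
  · intro v _; exact hvu v

lemma IP_card_fiber_const {n : ℕ} (x y : Fin n → ZMod 2)
    (hu : ∃ u, dotp x u = 1 ∧ dotp y u = 0) (hw : ∃ w, dotp x w = 0 ∧ dotp y w = 1)
    (a b t t' : ZMod 2) :
    #(univ.filter (fun v : Fin n → ZMod 2 => dotp x v = a ∧ dotp y v = b)) =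
    #(univ.filter (fun v : Fin n → ZMod 2 => dotp x v = t ∧ dotp y v = t')) := by
  obtain ⟨u, hu1, hu2⟩ := hu
  obtain ⟨w, hw1, hw2⟩ := hw
  have key := IP_card_fiber_shift x y ((a + t) • u + (b + t') • w) a b
  rw [IP_dotp_add, IP_dotp_add, IP_dotp_smul, IP_dotp_smul, IP_dotp_smul, IP_dotp_smul,
    hu1, hu2, hw1, hw2] at key
  simpa [mul_zero, mul_one, add_zero, zero_add, ← add_assoc, IP_zmod2_self] using key

lemma IP_exists_shift {n : ℕ} {x y : Fin n → ZMod 2} (hx : x ≠ 0) (hxy : x ≠ y) :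
    ∃ u, dotp x u = 1 ∧ dotp y u = 0 := by
  classical
  have hdiff : ∃ j, x j ≠ y j := by
    by_contra h; push_neg at h; exact hxy (funext h)
  obtain ⟨j, hj⟩ := hdiff
  rcases IP_zmod2_cases (x j) with hxj | hxj
  · have hyj : y j = 1 := by
      rcases IP_zmod2_cases (y j) with h0 | h1
      · exact absurd (hxj.trans h0.symm) hj
      · exact h1
    obtain ⟨l, hl⟩ := IP_exists_one hx
    rcases IP_zmod2_cases (y l) with hyl | hyl
    · exact ⟨Pi.single l 1, by rw [IP_dotp_single, hl], by rw [IP_dotp_single, hyl]⟩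
    · refine ⟨Pi.single l 1 + Pi.single j 1, ?_, ?_⟩
      · rw [IP_dotp_add, IP_dotp_single, IP_dotp_single, hl, hxj, add_zero]
      · rw [IP_dotp_add, IP_dotp_single, IP_dotp_single, hyl, hyj]; exact IP_zmod2_self 1
  · have hyj : y j = 0 := by
      rcases IP_zmod2_cases (y j) with h0 | h1
      · exact h0
      · exact absurd (hxj.trans h1.symm) hj
    exact ⟨Pi.single j 1, by rw [IP_dotp_single, hxj], by rw [IP_dotp_single, hyj]⟩

lemma IP_card_dotp_pair {n : ℕ} {x y : Fin n → ZMod 2} (hx : x ≠ 0) (hy : y ≠ 0)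
    (hxy : x ≠ y) (t t' : ZMod 2) :
    4 * #(univ.filter (fun v : Fin n → ZMod 2 => dotp x v = t ∧ dotp y v = t')) = 2 ^ n := by
  classical
  have hu := IP_exists_shift hx hxy
  have hw' := IP_exists_shift hy hxy.symm
  have hw : ∃ w, dotp x w = 0 ∧ dotp y w = 1 := by
    obtain ⟨w, h1, h2⟩ := hw'; exact ⟨w, h2, h1⟩
  have hconst := IP_card_fiber_const x y hu hw
  have hfib : #(univ : Finset (Fin n → ZMod 2)) =
      ∑ p : ZMod 2 × ZMod 2, #(univ.filter
        (fun v : Fin n → ZMod 2 => (dotp x v, dotp y v) = p)) :=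
    Finset.card_eq_sum_card_fiberwise (fun v _ => mem_univ _)
  have heach : ∀ p : ZMod 2 × ZMod 2,
      #(univ.filter (fun v : Fin n → ZMod 2 => (dotp x v, dotp y v) = p)) =
      #(univ.filter (fun v : Fin n → ZMod 2 => dotp x v = t ∧ dotp y v = t')) := by
    intro p
    rw [Finset.filter_congr (fun v _ => (Prod.ext_iff :
      (dotp x v, dotp y v) = p ↔ _))]
    exact hconst p.1 p.2 t t'
  rw [Finset.sum_congr rfl (fun p _ => heach p), Finset.sum_const] at hfib
  have hcard : #(univ : Finset (Fin n → ZMod 2)) = 2 ^ n := by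
    rw [Finset.card_univ]; simp [Fintype.card_fun]
  have h4 : #(univ : Finset (ZMod 2 × ZMod 2)) = 4 := by decide
  rw [hcard, h4, smul_eq_mul] at hfib
  omega

lemma IP_count_forall_pi {m k : ℕ} (Q : Fin k → (Fin m → ZMod 2) → Prop)
    [∀ i, DecidablePred (Q i)] :
    #(univ.filter (fun a : Fin k → Fin m → ZMod 2 => ∀ i, Q i (a i))) =
    ∏ i, #(univ.filter (Q i)) := by
  classical
  rw [show (univ.filter (fun a : Fin k → Fin m → ZMod 2 => ∀ i, Q i (a i)))
      = Fintype.piFinset (fun i => univ.filter (Q i)) from ?_]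
  · exact Fintype.card_piFinset _
  · ext a
    simp [Fintype.mem_piFinset]

lemma IP_count_pattern {m k : ℕ} {x : Fin m → ZMod 2} (hx : x ≠ 0) (t : Fin k → ZMod 2) :
    2 ^ k * #(univ.filter (fun a : Fin k → Fin m → ZMod 2 => ∀ i, dotp x (a i) = t i))
      = 2 ^ (m * k) := by
  classical
  rw [IP_count_forall_pi (fun i v => dotp x v = t i)]
  calc 2 ^ k * ∏ i, #(univ.filter (fun v : Fin m → ZMod 2 => dotp x v = t i))
      = ∏ i : Fin k, (2 * #(univ.filter (fun v : Fin m → ZMod 2 => dotp x v = t i))) := by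
        rw [Finset.prod_mul_distrib, Finset.prod_const, card_univ, Fintype.card_fin]
    _ = ∏ _i : Fin k, 2 ^ m := Finset.prod_congr rfl (fun i _ => IP_card_dotp_eq hx (t i))
    _ = 2 ^ (m * k) := by rw [Finset.prod_const, card_univ, Fintype.card_fin, ← pow_mul]

lemma IP_count_pattern_pair {m k : ℕ} {x y : Fin m → ZMod 2} (hx : x ≠ 0) (hy : y ≠ 0)
    (hxy : x ≠ y) (t t' : Fin k → ZMod 2) :
    4 ^ k * #(univ.filter (fun a : Fin k → Fin m → ZMod 2 =>
        ∀ i, dotp x (a i) = t i ∧ dotp y (a i) = t' i)) = 2 ^ (m * k) := by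
  classical
  rw [IP_count_forall_pi (fun i v => dotp x v = t i ∧ dotp y v = t' i)]
  calc 4 ^ k * ∏ i, #(univ.filter (fun v : Fin m → ZMod 2 => dotp x v = t i ∧ dotp y v = t' i))
      = ∏ i : Fin k, (4 * #(univ.filter (fun v : Fin m → ZMod 2 =>
          dotp x v = t i ∧ dotp y v = t' i))) := by
        rw [Finset.prod_mul_distrib, Finset.prod_const, card_univ, Fintype.card_fin]
    _ = ∏ _i : Fin k, 2 ^ m := Finset.prod_congr rfl
        (fun i _ => IP_card_dotp_pair hx hy hxy (t i) (t' i))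
    _ = 2 ^ (m * k) := by rw [Finset.prod_const, card_univ, Fintype.card_fin, ← pow_mul]

lemma IP_card_swap {m k : ℕ} (P : (Fin m → Fin k → ZMod 2) → Prop) [DecidablePred P] :
    #(univ.filter (fun a : Fin k → Fin m → ZMod 2 => P (Function.swap a))) =
    #(univ.filter P) := by
  apply Finset.card_bij' (fun a _ => Function.swap a) (fun a _ => Function.swap a)
  · intro a ha
    simpa using (Finset.mem_filter.mp ha).2
  · intro a ha
    simpa using (Finset.mem_filter.mp ha).2
  · intro a _; rfl
  · intro a _; rfl

/-- The linear combination `∑ i, c i • a i`. -/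
def wvec {n K : ℕ} (c : Fin (K+1) → ZMod 2) (a : Fin (K+1) → Fin n → ZMod 2) :
    Fin n → ZMod 2 := fun j => ∑ i, c i * a i j

lemma IP_count_wvec_eq {n K : ℕ} {c : Fin (K+1) → ZMod 2} (hc : c ≠ 0) (z : Fin n → ZMod 2) :
    2 ^ n * #(univ.filter (fun a : Fin (K+1) → Fin n → ZMod 2 => wvec c a = z))
      = 2 ^ ((K+1) * n) := by
  classical
  have hcong : (univ.filter (fun a : Fin (K+1) → Fin n → ZMod 2 => wvec c a = z))
      = (univ.filter (fun a : Fin (K+1) → Fin n → ZMod 2 =>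
          ∀ j, dotp c (Function.swap a j) = z j)) := by
    apply Finset.filter_congr
    intro a _
    constructor
    · intro h j; rw [← h]; rfl
    · intro h; funext j; exact (h j).symm ▸ rfl
  rw [hcong, IP_card_swap (fun a' : Fin n → Fin (K+1) → ZMod 2 => ∀ j, dotp c (a' j) = z j)]
  exact IP_count_pattern hc z

lemma IP_count_wvec_pair {n K : ℕ} {c c' : Fin (K+1) → ZMod 2} (hc : c ≠ 0) (hc' : c' ≠ 0)
    (hcc : c ≠ c') (z z' : Fin n → ZMod 2) :
    4 ^ n * #(univ.filter (fun a : Fin (K+1) → Fin n → ZMod 2 =>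
        wvec c a = z ∧ wvec c' a = z')) = 2 ^ ((K+1) * n) := by
  classical
  have hcong : (univ.filter (fun a : Fin (K+1) → Fin n → ZMod 2 =>
      wvec c a = z ∧ wvec c' a = z'))
      = (univ.filter (fun a : Fin (K+1) → Fin n → ZMod 2 =>
          ∀ j, dotp c (Function.swap a j) = z j ∧ dotp c' (Function.swap a j) = z' j)) := by
    apply Finset.filter_congr
    intro a _
    constructor
    · intro h j
      exact ⟨by rw [← h.1]; rfl, by rw [← h.2]; rfl⟩
    · intro h
      exact ⟨funext fun j => ((h j).1).symm ▸ rfl, funext fun j => ((h j).2).symm ▸ rfl⟩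
  rw [hcong, IP_card_swap (fun a' : Fin n → Fin (K+1) → ZMod 2 =>
    ∀ j, dotp c (a' j) = z j ∧ dotp c' (a' j) = z' j)]
  exact IP_count_pattern_pair hc hc' hcc z z'

lemma IP_card_mem_eq_sum {Ω γ : Type*} [Fintype Ω] [DecidableEq γ] (g : Ω → γ) (B : Finset γ)
    [DecidableEq Ω] :
    #(univ.filter (fun a => g a ∈ B)) = ∑ z ∈ B, #(univ.filter (fun a => g a = z)) := by
  classical
  rw [Finset.card_eq_sum_card_fiberwise
    (f := g) (t := B) (s := univ.filter (fun a => g a ∈ B))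
    (fun x hx => (Finset.mem_filter.mp hx).2)]
  apply Finset.sum_congr rfl
  intro z hz
  congr 1
  ext a
  simp only [Finset.mem_filter, Finset.mem_univ, true_and]
  constructor
  · intro h; exact h.2
  · intro h; exact ⟨h ▸ hz, h⟩

end Counting

/-! ### Pushforward distributions and the second-moment method -/

section PushDist

open Classical in
/-- The distribution on rectangles obtained by pushing forward the uniform
distribution on `Ω` along `f`. -/
noncomputable def pushDist {α β Ω : Type*} [Fintype α] [Fintype β] [Fintype Ω] [Nonempty Ω]
    (f : Ω → Finset α × Finset β) : RectDist α β where
  prob R := ((univ.filter (fun ω => f ω = R)).card : ℝ) / (Fintype.card Ω : ℝ)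
  nonneg R := by positivity
  sum_one := by
    classical
    have h : ∑ R : Finset α × Finset β, ((univ.filter (fun ω => f ω = R)).card)
        = Fintype.card Ω := by
      rw [← Finset.card_univ (α := Ω)]
      exact (Finset.card_eq_sum_card_fiberwise (fun x _ => mem_univ _)).symm
    rw [← Finset.sum_div, ← Nat.cast_sum, h,
      div_self (by exact_mod_cast Fintype.card_ne_zero)]

open Classical in
lemma rectProb_pushDist {α β Ω : Type*} [Fintype α] [Fintype β] [Fintype Ω] [Nonempty Ω]
    (f : Ω → Finset α × Finset β) (P : Finset α × Finset β → Prop) :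
    rectProb (pushDist f) P
      = ((univ.filter (fun ω => P (f ω))).card : ℝ) / (Fintype.card Ω : ℝ) := by
  rw [rectProb]
  have key : ∀ R : Finset α × Finset β,
      (if P R then (pushDist f).prob R else 0) =
      ((if P R then (univ.filter (fun ω => f ω = R)).card else 0 : ℕ) : ℝ)
        / (Fintype.card Ω : ℝ) := by
    intro R
    by_cases h : P R <;> simp [h, pushDist]
  rw [Finset.sum_congr rfl (fun R _ => key R), ← Finset.sum_div, ← Nat.cast_sum]
  congr 2
  have hfib := Finset.card_eq_sum_card_fiberwise
    (s := univ.filter (fun ω => P (f ω))) (t := (univ : Finset (Finset α × Finset β)))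
    (f := f) (fun x _ => mem_univ _)
  rw [hfib]
  apply Finset.sum_congr rfl
  intro R _
  by_cases h : P R
  · simp only [h, if_true]
    congr 1
    ext ω
    simp only [mem_filter, mem_univ, true_and]
    constructor
    · intro he; exact ⟨by rw [he]; exact h, he⟩
    · intro he; exact he.2
  · simp only [h, if_false]
    symm
    rw [Finset.card_eq_zero]
    ext ω
    simp only [mem_filter, mem_univ, true_and, notMem_empty, iff_false, not_and]
    intro hP he; rw [he] at hP; exact h hP

lemma pushDist_support {α β Ω : Type*} [Fintype α] [Fintype β] [Fintype Ω] [Nonempty Ω]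
    (f : Ω → Finset α × Finset β) (R : Finset α × Finset β)
    (h : (pushDist f).prob R ≠ 0) : ∃ ω, f ω = R := by
  classical
  by_contra hc
  push_neg at hc
  apply h
  show ((univ.filter (fun ω => f ω = R)).card : ℝ) / (Fintype.card Ω : ℝ) = 0
  have he : (univ.filter (fun ω => f ω = R)) = ∅ := by
    ext ω; simp only [mem_filter, mem_univ, true_and, notMem_empty, iff_false]
    exact hc ω
  rw [he]; simp

open Classical in
lemma pushDist_hit_ge {α β Ω : Type*} [Fintype α] [Fintype β] [Fintype Ω] [Nonempty Ω]
    (f : Ω → Finset α × Finset β) (P : Finset α × Finset β → Prop)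
    (Z : Finset Ω) (hm : ∀ ω, ¬ P (f ω) → ω ∈ Z) (δ : ℝ)
    (hZ : (Z.card : ℝ) ≤ δ * (Fintype.card Ω : ℝ)) :
    1 - δ ≤ rectProb (pushDist f) P := by
  rw [rectProb_pushDist]
  have hNpos : (0:ℝ) < (Fintype.card Ω : ℝ) := by exact_mod_cast Fintype.card_pos
  have hsub : univ.filter (fun ω => ¬ P (f ω)) ⊆ Z :=
    fun ω hω => hm ω (Finset.mem_filter.mp hω).2
  have hcard : #(univ.filter (fun ω => ¬ P (f ω))) ≤ Z.card := Finset.card_le_card hsub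
  have hpm := Finset.card_filter_add_card_filter_not
    (s := (univ : Finset Ω)) (p := fun ω => P (f ω))
  rw [Finset.card_univ] at hpm
  have hcast : ((#(univ.filter (fun ω => P (f ω)))):ℝ)
      + ((#(univ.filter (fun ω => ¬ P (f ω)))):ℝ) = (Fintype.card Ω:ℝ) := by
    exact_mod_cast hpm
  have hcard' : ((#(univ.filter (fun ω => ¬ P (f ω)))):ℝ) ≤ (Z.card:ℝ) := by
    exact_mod_cast hcard
  rw [le_div_iff₀ hNpos]
  nlinarith [hZ, hcast, hcard']

end PushDist

section SecondMoment

lemma IP_second_moment {Ω : Type*} [Fintype Ω] (X : Ω → ℝ) (μ : ℝ) (hμ : 0 < μ)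
    (hsum : ∑ a, X a = μ * (Fintype.card Ω : ℝ))
    (hsq : ∑ a, X a ^ 2 ≤ μ * (Fintype.card Ω : ℝ) + μ ^ 2 * (Fintype.card Ω : ℝ))
    (s : Finset Ω) (hs : ∀ a ∈ s, X a = 0) :
    (s.card : ℝ) ≤ (Fintype.card Ω : ℝ) / μ := by
  have h1 : (s.card : ℝ) * μ ^ 2 = ∑ a ∈ s, (X a - μ) ^ 2 := by
    rw [Finset.sum_congr rfl (fun a ha => by rw [hs a ha, zero_sub, neg_sq]),
      Finset.sum_const, nsmul_eq_mul]
  have h2 : ∑ a ∈ s, (X a - μ) ^ 2 ≤ ∑ a : Ω, (X a - μ) ^ 2 :=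
    Finset.sum_le_sum_of_subset_of_nonneg (Finset.subset_univ s)
      (fun a _ _ => sq_nonneg _)
  have h3 : ∑ a : Ω, (X a - μ) ^ 2
      = (∑ a : Ω, X a ^ 2) - 2 * μ * (∑ a : Ω, X a) + μ ^ 2 * (Fintype.card Ω : ℝ) := by
    rw [Finset.sum_congr rfl (fun a _ => by ring_nf :
      ∀ a ∈ (univ : Finset Ω), (X a - μ) ^ 2 = X a ^ 2 - 2 * μ * X a + μ ^ 2)]
    rw [Finset.sum_add_distrib, Finset.sum_sub_distrib, ← Finset.mul_sum,
      Finset.sum_const, nsmul_eq_mul, Finset.card_univ]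
    ring
  have h4 : ∑ a : Ω, (X a - μ) ^ 2 ≤ μ * (Fintype.card Ω : ℝ) := by
    rw [h3, hsum]; nlinarith [hsq]
  have h5 : (s.card : ℝ) * μ ^ 2 ≤ μ * (Fintype.card Ω : ℝ) := le_trans (h1 ▸ h2) h4
  rw [le_div_iff₀ hμ]
  nlinarith [h5, hμ]

lemma IP_ite_one_mul_ite_one (p q : Prop) [Decidable p] [Decidable q] :
    (if p then (1:ℝ) else 0) * (if q then (1:ℝ) else 0) = if p ∧ q then (1:ℝ) else 0 := by
  by_cases hp : p <;> by_cases hq : q <;> simp [hp, hq]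

lemma IP_count_zero_bound {Ω ι : Type*} [Fintype Ω] [Nonempty Ω] [DecidableEq ι] (S : Finset ι)
    (p : ι → Ω → Prop) [∀ x, DecidablePred (p x)] (d1 : ℝ) (hd1 : 0 < d1)
    (hS : S.Nonempty)
    (h1 : ∀ x ∈ S, ((univ.filter (fun a => p x a)).card : ℝ) = d1)
    (h2 : ∀ x ∈ S, ∀ y ∈ S, x ≠ y →
      ((univ.filter (fun a => p x a ∧ p y a)).card : ℝ) ≤ d1 ^ 2 / (Fintype.card Ω : ℝ))
    (Z : Finset Ω) (hZ : ∀ a ∈ Z, ∀ x ∈ S, ¬ p x a) :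
    ((Z.card : ℝ) ≤ (Fintype.card Ω : ℝ) ^ 2 / ((S.card : ℝ) * d1)) := by
  classical
  set N : ℝ := (Fintype.card Ω : ℝ) with hN
  have hNpos : 0 < N := by
    rw [hN]; exact_mod_cast Fintype.card_pos
  set X : Ω → ℝ := fun a => ∑ x ∈ S, (if p x a then (1:ℝ) else 0) with hX
  set μ : ℝ := (S.card : ℝ) * d1 / N with hμdef
  have hScard : 0 < (S.card : ℝ) := by exact_mod_cast Finset.card_pos.mpr hS
  have hμ : 0 < μ := by positivity
  have hsum : ∑ a, X a = μ * N := by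
    rw [hX]
    simp only []
    rw [Finset.sum_comm]
    have heach : ∀ x ∈ S, (∑ a : Ω, if p x a then (1:ℝ) else 0) = d1 := fun x hx => by
      rw [Finset.sum_boole]; exact h1 x hx
    rw [Finset.sum_congr rfl heach, Finset.sum_const, nsmul_eq_mul, hμdef]
    field_simp
  have hsq : ∑ a, X a ^ 2 ≤ μ * N + μ ^ 2 * N := by
    have expand : ∀ a : Ω, X a ^ 2 = ∑ x ∈ S, ∑ y ∈ S, (if p x a ∧ p y a then (1:ℝ) else 0) := by
      intro a
      rw [hX, sq, Finset.sum_mul_sum]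
      exact Finset.sum_congr rfl (fun x _ => Finset.sum_congr rfl
        (fun y _ => IP_ite_one_mul_ite_one _ _))
    rw [Finset.sum_congr rfl (fun a _ => expand a), Finset.sum_comm]
    have inner_swap : ∀ x ∈ S, ∑ a : Ω, ∑ y ∈ S, (if p x a ∧ p y a then (1:ℝ) else 0)
        = ∑ y ∈ S, ((univ.filter (fun a => p x a ∧ p y a)).card : ℝ) := by
      intro x _
      rw [Finset.sum_comm]
      exact Finset.sum_congr rfl (fun y _ => by rw [Finset.sum_boole])
    rw [Finset.sum_congr rfl inner_swap]
    have bound : ∀ x ∈ S, ∑ y ∈ S, ((univ.filter (fun a => p x a ∧ p y a)).card : ℝ)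
        ≤ d1 + (S.card : ℝ) * (d1 ^ 2 / N) := by
      intro x hx
      rw [← Finset.add_sum_erase _ _ hx]
      have hdiag : ((univ.filter (fun a => p x a ∧ p x a)).card : ℝ) = d1 := by
        rw [Finset.filter_congr (fun a _ => and_self_iff), h1 x hx]
      rw [hdiag]
      gcongr
      calc ∑ y ∈ S.erase x, ((univ.filter (fun a => p x a ∧ p y a)).card : ℝ)
          ≤ ∑ y ∈ S.erase x, d1 ^ 2 / N := by
            apply Finset.sum_le_sum
            intro y hy
            exact h2 x hx y (Finset.mem_of_mem_erase hy)
              (fun h => (Finset.ne_of_mem_erase hy) h.symm)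
        _ = ((S.erase x).card : ℝ) * (d1 ^ 2 / N) := by
            rw [Finset.sum_const, nsmul_eq_mul]
        _ ≤ (S.card : ℝ) * (d1 ^ 2 / N) := by
            apply mul_le_mul_of_nonneg_right _ (by positivity)
            exact_mod_cast Finset.card_le_card (Finset.erase_subset _ _)
    calc ∑ x ∈ S, ∑ y ∈ S, ((univ.filter (fun a => p x a ∧ p y a)).card : ℝ)
        ≤ ∑ x ∈ S, (d1 + (S.card : ℝ) * (d1 ^ 2 / N)) := Finset.sum_le_sum bound
      _ = (S.card : ℝ) * (d1 + (S.card : ℝ) * (d1 ^ 2 / N)) := by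
          rw [Finset.sum_const, nsmul_eq_mul]
      _ = μ * N + μ ^ 2 * N := by
          rw [hμdef]; field_simp
  have hzero := IP_second_moment X μ hμ hsum hsq Z
    (by
      intro a ha
      rw [hX]
      exact Finset.sum_eq_zero (fun x hx => by simp [hZ a ha x hx]))
  calc ((Z.card : ℝ))
      ≤ N / μ := hzero
    _ = N ^ 2 / ((S.card : ℝ) * d1) := by
        rw [hμdef]; field_simp

end SecondMoment

section Algebra

lemma IP_alg1 {N s c : ℝ} (hs : s ≠ 0) (hc : c ≠ 0) (hN : N ≠ 0) :
    N^2/(s * (N/c)) = N * (c/s) := by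
  field_simp

lemma IP_alg2 {N b c d : ℝ} (hb : b ≠ 0) (hc : c ≠ 0) (hd : d ≠ 0) (hN : N ≠ 0) :
    N^2/(c * (b*N/d)) = N * (d/(c*b)) := by
  field_simp

lemma IP_alg3 {N c c2 : ℝ} (hc : c ≠ 0) (hN : N ≠ 0) (h : c^2 = c2) :
    (N/c)^2/N = N/c2 := by
  subst h
  field_simp

lemma IP_alg4 {N b d d2 : ℝ} (hd : d ≠ 0) (hN : N ≠ 0) (h : d^2 = d2) :
    (b*N/d)^2/N = b^2*(N/d2) := by
  subst h
  field_simp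

end Algebra

/-! ### The main theorem -/

set_option maxHeartbeats 2000000 in
/-- for every `ε ∈ (0,1/2)` and all sufficiently large `n`, the
inner-product function `IP_n` has `(2·2^{−εn/4}, ⌊(1/2 − ε)n⌋)`-hitting
monochromatic rectangle-distributions. -/
theorem ip_has_hitting_mono_dists {ε : ℝ} (hε0 : 0 < ε) (hε : ε < 1/2) :
    ∃ N : ℕ, ∀ n ≥ N, ∀ c : ZMod 2,
      ∃ σ : RectDist (Fin n → ZMod 2) (Fin n → ZMod 2),
        (∀ R, σ.prob R ≠ 0 → ∀ u ∈ R.1, ∀ v ∈ R.2, dotp u v = c) ∧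
        IsHitting σ (2 * (2:ℝ) ^ (-(ε * n / 4))) (Nat.floor ((1/2 - ε) * (n:ℝ))) := by
  classical
  refine ⟨⌈3/ε⌉₊ + 8, ?_⟩
  intro n hn b
  set K := n / 2 with hKdef
  set h := Nat.floor ((1/2 - ε) * (n:ℝ)) with hhdef
  -- numeric facts
  have hn8 : 8 ≤ n := le_trans (Nat.le_add_left 8 _) hn
  have hnr : (8:ℝ) ≤ (n:ℝ) := by exact_mod_cast hn8
  have hεn : 3 ≤ ε * n := by
    have h1 : (3:ℝ)/ε ≤ (⌈3/ε⌉₊ : ℝ) := Nat.le_ceil _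
    have h2 : ((⌈3/ε⌉₊ + 8 : ℕ) : ℝ) ≤ (n:ℝ) := by exact_mod_cast hn
    push_cast at h2
    have h3 : 3/ε ≤ (n:ℝ) := by linarith
    have := (div_le_iff₀ hε0).mp h3
    linarith
  have hh1 : (h:ℝ) ≤ (1/2 - ε) * n := by
    rw [hhdef]; exact Nat.floor_le (by nlinarith)
  have hK1 : (K:ℝ) ≤ (n:ℝ)/2 := by
    rw [hKdef]; exact_mod_cast Nat.cast_div_le
  have hK2 : (n:ℝ) ≤ 2*(K:ℝ) + 1 := by
    have : n ≤ 2*(n/2) + 1 := by omega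
    rw [hKdef]; exact_mod_cast this
  have hhn : (h:ℝ) + 1 ≤ (n:ℝ) := by nlinarith
  -- the construction
  set tp : Fin (K+1) → ZMod 2 := fun i => if i = 0 then b else 0 with htp
  set f : (Fin (K+1) → Fin n → ZMod 2) →
      Finset (Fin n → ZMod 2) × Finset (Fin n → ZMod 2) :=
    fun a => (univ.filter (fun u => ∀ i, dotp u (a i) = tp i),
      (univ.filter (fun cf : Fin (K+1) → ZMod 2 => cf 0 = 1)).image
        (fun cf => wvec cf a)) with hf
  refine ⟨pushDist f, ?_, ?_⟩
  · -- monochromaticity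
    intro R hR u hu v hv
    obtain ⟨a, ha⟩ := pushDist_support f R hR
    rw [← ha] at hu hv
    have hu' : ∀ i, dotp u (a i) = tp i :=
      (Finset.mem_filter.mp (show u ∈ univ.filter (fun u => ∀ i, dotp u (a i) = tp i) from hu)).2
    obtain ⟨cf, hcf, hv'⟩ := Finset.mem_image.mp
      (show v ∈ (univ.filter (fun cf : Fin (K+1) → ZMod 2 => cf 0 = 1)).image
        (fun cf => wvec cf a) from hv)
    have hcf0 : cf 0 = 1 := (Finset.mem_filter.mp hcf).2
    rw [← hv']
    have step1 : dotp u (wvec cf a) = ∑ i, cf i * dotp u (a i) := by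
      show ∑ j : Fin n, u j * (∑ i : Fin (K+1), cf i * a i j)
          = ∑ i : Fin (K+1), cf i * (∑ j : Fin n, u j * a i j)
      calc ∑ j : Fin n, u j * (∑ i : Fin (K+1), cf i * a i j)
          = ∑ j : Fin n, ∑ i : Fin (K+1), cf i * (u j * a i j) :=
            Finset.sum_congr rfl (fun j _ => by
              rw [Finset.mul_sum]
              exact Finset.sum_congr rfl fun i _ => by ring)
        _ = ∑ i : Fin (K+1), ∑ j : Fin n, cf i * (u j * a i j) := Finset.sum_comm
        _ = ∑ i : Fin (K+1), cf i * (∑ j : Fin n, u j * a i j) :=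
            Finset.sum_congr rfl (fun i _ => by rw [Finset.mul_sum])
    rw [step1, Finset.sum_congr rfl (fun i _ => by rw [hu' i])]
    calc ∑ i : Fin (K+1), cf i * tp i
        = ∑ i : Fin (K+1), (if i = 0 then cf i * b else 0) := by
          apply Finset.sum_congr rfl
          intro i _
          rw [htp]
          by_cases hi : i = 0 <;> simp [hi]
      _ = cf 0 * b := by
          rw [Finset.sum_ite_eq' univ (0 : Fin (K+1)) (fun i => cf i * b)]
          simp
      _ = b := by rw [hcf0, one_mul]
  · -- hitting
    intro A B hA hB
    -- rpow helpers
    have Gpos : ∀ e : ℝ, (0:ℝ) < (2:ℝ) ^ e := fun e => Real.rpow_pos_of_pos two_pos e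
    have Gmono : ∀ {e e' : ℝ}, e ≤ e' → (2:ℝ)^e ≤ (2:ℝ)^e' :=
      fun hee => Real.rpow_le_rpow_of_exponent_le one_le_two hee
    -- cardinalities
    have hcardΩ : (Fintype.card (Fin (K+1) → Fin n → ZMod 2) : ℝ) = (2:ℝ)^(n*(K+1)) := by
      have hc : Fintype.card (Fin (K+1) → Fin n → ZMod 2) = 2^(n*(K+1)) := by
        rw [Fintype.card_fun]
        simp [Fintype.card_fun, ← pow_mul]
      exact_mod_cast hc
    set N : ℝ := (2:ℝ)^(n*(K+1)) with hNdef
    have hNpos : (0:ℝ) < N := by rw [hNdef]; positivity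
    have hcardα : (Fintype.card (Fin n → ZMod 2) : ℝ) = (2:ℝ)^((n:ℝ)) := by
      have hc : Fintype.card (Fin n → ZMod 2) = 2^n := by simp [Fintype.card_fun]
      rw [hc]
      push_cast
      rw [Real.rpow_natCast]
    have hA' : (2:ℝ)^((n:ℝ) - h) ≤ A.card := by
      have hh := hA
      rw [hcardα] at hh
      calc (2:ℝ)^((n:ℝ)-h) = (2:ℝ)^(-(h:ℝ)) * (2:ℝ)^((n:ℝ)) := by
            rw [← Real.rpow_add two_pos]; ring_nf
        _ ≤ A.card := hh
    have hB' : (2:ℝ)^((n:ℝ) - h) ≤ B.card := by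
      have hh := hB
      rw [hcardα] at hh
      calc (2:ℝ)^((n:ℝ)-h) = (2:ℝ)^(-(h:ℝ)) * (2:ℝ)^((n:ℝ)) := by
            rw [← Real.rpow_add two_pos]; ring_nf
        _ ≤ B.card := hh
    have h1nh : (1:ℝ) ≤ (n:ℝ) - h := by linarith
    have hA2 : (2:ℝ) ≤ A.card := by
      calc (2:ℝ) = (2:ℝ)^(1:ℝ) := (Real.rpow_one 2).symm
        _ ≤ (2:ℝ)^((n:ℝ)-h) := Gmono h1nh
        _ ≤ A.card := hA'
    have hBpos : (0:ℝ) < B.card := lt_of_lt_of_le (Gpos _) hB'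
    -- the punctured set A \ {0}
    have hA1 : 1 ≤ A.card := by
      have : (1:ℝ) ≤ (A.card : ℝ) := by linarith
      exact_mod_cast this
    have hsA : (A.card:ℝ) - 1 ≤ ((A.erase 0).card : ℝ) := by
      have hNat := Finset.pred_card_le_card_erase (s := A) (a := (0 : Fin n → ZMod 2))
      have hc : ((A.card - 1 : ℕ) : ℝ) ≤ ((A.erase 0).card : ℝ) := by exact_mod_cast hNat
      rwa [Nat.cast_sub hA1, Nat.cast_one] at hc
    have hsA2 : (2:ℝ)^((n:ℝ) - h - 1) ≤ ((A.erase 0).card:ℝ) := by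
      have e : (2:ℝ)^((n:ℝ)-h-1) = (2:ℝ)^((n:ℝ)-h) / 2 := by
        rw [Real.rpow_sub two_pos, Real.rpow_one]
      rw [e]; linarith
    have hsApos : (0:ℝ) < ((A.erase 0).card:ℝ) := lt_of_lt_of_le (Gpos _) hsA2
    have hSAne : (A.erase 0).Nonempty := by
      apply Finset.card_pos.mp
      exact_mod_cast hsApos
    -- A-side bound
    set d1A : ℝ := N / (2:ℝ)^(K+1) with hd1Adef
    have hd1A : 0 < d1A := by rw [hd1Adef, hNdef]; positivity
    have h1A : ∀ x ∈ A.erase 0,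
        ((univ.filter (fun a : Fin (K+1) → Fin n → ZMod 2 =>
          ∀ i, dotp x (a i) = tp i)).card : ℝ) = d1A := by
      intro x hx
      have hx0 : x ≠ 0 := (Finset.mem_erase.mp hx).1
      have hcount := IP_count_pattern (k := K+1) hx0 tp
      have hcast : (2:ℝ)^(K+1) * ((univ.filter (fun a : Fin (K+1) → Fin n → ZMod 2 =>
          ∀ i, dotp x (a i) = tp i)).card : ℝ) = (2:ℝ)^(n*(K+1)) := by exact_mod_cast hcount
      rw [hd1Adef, hNdef, eq_div_iff (by positivity)]
      linarith
    have h2A : ∀ x ∈ A.erase 0, ∀ y ∈ A.erase 0, x ≠ y →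
        ((univ.filter (fun a : Fin (K+1) → Fin n → ZMod 2 =>
          (∀ i, dotp x (a i) = tp i) ∧ (∀ i, dotp y (a i) = tp i))).card : ℝ)
          ≤ d1A^2 / (Fintype.card (Fin (K+1) → Fin n → ZMod 2) : ℝ) := by
      intro x hx y hy hxy
      have hx0 : x ≠ 0 := (Finset.mem_erase.mp hx).1
      have hy0 : y ≠ 0 := (Finset.mem_erase.mp hy).1
      have hcong : (univ.filter (fun a : Fin (K+1) → Fin n → ZMod 2 =>
          (∀ i, dotp x (a i) = tp i) ∧ (∀ i, dotp y (a i) = tp i)))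
          = (univ.filter (fun a : Fin (K+1) → Fin n → ZMod 2 =>
            ∀ i, dotp x (a i) = tp i ∧ dotp y (a i) = tp i)) := by
        apply Finset.filter_congr; intro a _
        exact forall_and.symm
      rw [hcong, hcardΩ]
      have hcount := IP_count_pattern_pair (k := K+1) hx0 hy0 hxy tp tp
      have hcast : (4:ℝ)^(K+1) * ((univ.filter (fun a : Fin (K+1) → Fin n → ZMod 2 =>
          ∀ i, dotp x (a i) = tp i ∧ dotp y (a i) = tp i)).card : ℝ)
            = (2:ℝ)^(n*(K+1)) := by exact_mod_cast hcount
      have h42 : ((2:ℝ)^(K+1))^2 = (4:ℝ)^(K+1) := by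
        rw [← pow_mul, mul_comm (K+1) 2, pow_mul]; norm_num
      have hrhs : d1A^2 / N = N / (4:ℝ)^(K+1) := by
        rw [hd1Adef]
        exact IP_alg3 (by positivity) (ne_of_gt hNpos) h42
      rw [hrhs, le_div_iff₀ (by positivity), hNdef]
      linarith
    set zA := univ.filter (fun a : Fin (K+1) → Fin n → ZMod 2 =>
        ∀ x ∈ A.erase 0, ¬ (∀ i, dotp x (a i) = tp i)) with hzAdef
    have hAbound := IP_count_zero_bound (A.erase 0)
      (fun x (a : Fin (K+1) → Fin n → ZMod 2) => ∀ i, dotp x (a i) = tp i)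
      d1A hd1A hSAne h1A h2A zA (fun a ha => (Finset.mem_filter.mp ha).2)
    rw [hcardΩ] at hAbound
    -- B-side bound
    set Cs := univ.filter (fun cf : Fin (K+1) → ZMod 2 => cf 0 = 1) with hCsdef
    have hCs0 : ∀ cf ∈ Cs, cf ≠ 0 := by
      intro cf hcf hcon
      have hmem : cf 0 = 1 := (Finset.mem_filter.mp hcf).2
      rw [hcon] at hmem
      simpa using hmem.symm
    have hCs2 : 2 * Cs.card = 2^(K+1) := by
      have hx0 : (Pi.single (0:Fin (K+1)) (1:ZMod 2) : Fin (K+1) → ZMod 2) ≠ 0 := by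
        intro hcon
        have h00 := congrFun hcon (0 : Fin (K+1))
        rw [Pi.single_eq_same] at h00
        exact one_ne_zero h00
      have hcg : Cs = univ.filter
          (fun cf : Fin (K+1) → ZMod 2 => dotp (Pi.single 0 1) cf = 1) := by
        rw [hCsdef]
        apply Finset.filter_congr
        intro cf _
        rw [IP_dotp_single_left]
      rw [hcg]
      exact IP_card_dotp_eq hx0 1
    have hCscard : (Cs.card : ℝ) = (2:ℝ)^K := by
      have hc : Cs.card = 2^K := by
        have h2 := hCs2
        rw [pow_succ] at h2
        omega
      exact_mod_cast hc
    have hCsne : Cs.Nonempty := by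
      apply Finset.card_pos.mp
      have : (0:ℝ) < Cs.card := by rw [hCscard]; positivity
      exact_mod_cast this
    set d1B : ℝ := (B.card:ℝ) * N / (2:ℝ)^n with hd1Bdef
    have hd1B : 0 < d1B := by rw [hd1Bdef]; positivity
    have hmulc : (K+1) * n = n * (K+1) := Nat.mul_comm _ _
    have h1B : ∀ cf ∈ Cs,
        ((univ.filter (fun a : Fin (K+1) → Fin n → ZMod 2 => wvec cf a ∈ B)).card : ℝ)
          = d1B := by
      intro cf hcf
      have hc0 : cf ≠ 0 := hCs0 cf hcf
      have hsum := IP_card_mem_eq_sum (g := fun a : Fin (K+1) → Fin n → ZMod 2 => wvec cf a) B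
      have heach : ∀ z ∈ B, ((univ.filter (fun a : Fin (K+1) → Fin n → ZMod 2 =>
          wvec cf a = z)).card : ℝ) = N / (2:ℝ)^n := by
        intro z _
        have hc := IP_count_wvec_eq hc0 z
        have hcast : (2:ℝ)^n * ((univ.filter (fun a : Fin (K+1) → Fin n → ZMod 2 =>
            wvec cf a = z)).card : ℝ) = (2:ℝ)^((K+1)*n) := by exact_mod_cast hc
        rw [eq_div_iff (by positivity), hNdef, ← hmulc]
        linarith
      rw [hd1Bdef]
      calc ((univ.filter (fun a : Fin (K+1) → Fin n → ZMod 2 => wvec cf a ∈ B)).card : ℝ)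
          = ∑ z ∈ B, ((univ.filter (fun a : Fin (K+1) → Fin n → ZMod 2 =>
              wvec cf a = z)).card : ℝ) := by exact_mod_cast hsum
        _ = ∑ _z ∈ B, N / (2:ℝ)^n := Finset.sum_congr rfl heach
        _ = (B.card:ℝ) * (N / (2:ℝ)^n) := by rw [Finset.sum_const, nsmul_eq_mul]
        _ = (B.card:ℝ) * N / (2:ℝ)^n := by ring
    have h2B : ∀ cf ∈ Cs, ∀ cf' ∈ Cs, cf ≠ cf' →
        ((univ.filter (fun a : Fin (K+1) → Fin n → ZMod 2 =>
          wvec cf a ∈ B ∧ wvec cf' a ∈ B)).card : ℝ)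
          ≤ d1B^2 / (Fintype.card (Fin (K+1) → Fin n → ZMod 2):ℝ) := by
      intro cf hcf cf' hcf' hne
      have hc0 : cf ≠ 0 := hCs0 cf hcf
      have hc0' : cf' ≠ 0 := hCs0 cf' hcf'
      have hcong : (univ.filter (fun a : Fin (K+1) → Fin n → ZMod 2 =>
          wvec cf a ∈ B ∧ wvec cf' a ∈ B))
          = (univ.filter (fun a : Fin (K+1) → Fin n → ZMod 2 =>
            (wvec cf a, wvec cf' a) ∈ B ×ˢ B)) := by
        apply Finset.filter_congr
        intro a _
        exact (Finset.mem_product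
          (s := B) (t := B) (p := (wvec cf a, wvec cf' a))).symm
      rw [hcong]
      have hsum := IP_card_mem_eq_sum
        (g := fun a : Fin (K+1) → Fin n → ZMod 2 => (wvec cf a, wvec cf' a)) (B ×ˢ B)
      have heach : ∀ p ∈ B ×ˢ B, ((univ.filter (fun a : Fin (K+1) → Fin n → ZMod 2 =>
          (wvec cf a, wvec cf' a) = p)).card : ℝ) = N / (4:ℝ)^n := by
        intro p _
        have hcongp : (univ.filter (fun a : Fin (K+1) → Fin n → ZMod 2 =>
            (wvec cf a, wvec cf' a) = p))
            = (univ.filter (fun a : Fin (K+1) → Fin n → ZMod 2 =>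
              wvec cf a = p.1 ∧ wvec cf' a = p.2)) := by
          apply Finset.filter_congr
          intro a _
          exact Prod.ext_iff
        rw [hcongp]
        have hc := IP_count_wvec_pair hc0 hc0' hne p.1 p.2
        have hcast : (4:ℝ)^n * ((univ.filter (fun a : Fin (K+1) → Fin n → ZMod 2 =>
            wvec cf a = p.1 ∧ wvec cf' a = p.2)).card : ℝ) = (2:ℝ)^((K+1)*n) := by
          exact_mod_cast hc
        rw [eq_div_iff (by positivity), hNdef, ← hmulc]
        linarith
      have htot : ((univ.filter (fun a : Fin (K+1) → Fin n → ZMod 2 =>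
          (wvec cf a, wvec cf' a) ∈ B ×ˢ B)).card : ℝ)
          = ((B.card:ℝ))^2 * (N/(4:ℝ)^n) := by
        calc ((univ.filter (fun a : Fin (K+1) → Fin n → ZMod 2 =>
            (wvec cf a, wvec cf' a) ∈ B ×ˢ B)).card : ℝ)
            = ∑ p ∈ B ×ˢ B, ((univ.filter (fun a : Fin (K+1) → Fin n → ZMod 2 =>
                (wvec cf a, wvec cf' a) = p)).card : ℝ) := by exact_mod_cast hsum
          _ = ∑ _p ∈ B ×ˢ B, N/(4:ℝ)^n := Finset.sum_congr rfl heach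
          _ = (((B ×ˢ B).card : ℕ) : ℝ) * (N/(4:ℝ)^n) := by
              rw [Finset.sum_const, nsmul_eq_mul]
          _ = ((B.card:ℝ))^2 * (N/(4:ℝ)^n) := by
              rw [Finset.card_product]
              push_cast
              ring
      have h4n : ((2:ℝ)^n)^2 = (4:ℝ)^n := by
        rw [← pow_mul, mul_comm n 2, pow_mul]; norm_num
      have hfin : d1B^2/N = ((B.card:ℝ))^2 * (N/(4:ℝ)^n) := by
        rw [hd1Bdef]
        exact IP_alg4 (by positivity) (ne_of_gt hNpos) h4n
      rw [htot, hcardΩ]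
      exact le_of_eq hfin.symm
    set zB := univ.filter (fun a : Fin (K+1) → Fin n → ZMod 2 =>
        ∀ cf ∈ Cs, ¬ (wvec cf a ∈ B)) with hzBdef
    have hBbound := IP_count_zero_bound Cs
      (fun cf (a : Fin (K+1) → Fin n → ZMod 2) => wvec cf a ∈ B)
      d1B hd1B hCsne h1B h2B zB (fun a ha => (Finset.mem_filter.mp ha).2)
    rw [hcardΩ] at hBbound
    -- union bound
    have hkey : ∀ a : Fin (K+1) → Fin n → ZMod 2,
        (¬ ∀ x ∈ A.erase 0, ¬ (∀ i, dotp x (a i) = tp i)) →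
        (¬ ∀ cf ∈ Cs, ¬ (wvec cf a ∈ B)) →
        (((f a).1 ×ˢ (f a).2) ∩ (A ×ˢ B)).Nonempty := by
      intro a h1 h2
      push_neg at h1 h2
      obtain ⟨x, hxS, hxP⟩ := h1
      obtain ⟨cf, hcfS, hcfP⟩ := h2
      refine ⟨(x, wvec cf a), ?_⟩
      rw [Finset.mem_inter, Finset.mem_product, Finset.mem_product]
      refine ⟨⟨?_, ?_⟩, Finset.mem_of_mem_erase hxS, hcfP⟩
      · show x ∈ univ.filter (fun u => ∀ i, dotp u (a i) = tp i)
        exact Finset.mem_filter.mpr ⟨Finset.mem_univ _, hxP⟩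
      · show wvec cf a ∈ (univ.filter (fun cf : Fin (K+1) → ZMod 2 => cf 0 = 1)).image
          (fun cf => wvec cf a)
        exact Finset.mem_image.mpr ⟨cf, hcfS, rfl⟩
    have hmem : ∀ a : Fin (K+1) → Fin n → ZMod 2,
        ¬ ((((f a).1 ×ˢ (f a).2) ∩ (A ×ˢ B)).Nonempty) → a ∈ zA ∪ zB := by
      intro a hna
      rw [Finset.mem_union]
      by_contra hcon
      rw [not_or] at hcon
      obtain ⟨hc1, hc2⟩ := hcon
      apply hna
      apply hkey a
      · intro hall
        exact hc1 (Finset.mem_filter.mpr ⟨Finset.mem_univ _, hall⟩)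
      · intro hall
        exact hc2 (Finset.mem_filter.mpr ⟨Finset.mem_univ _, hall⟩)
    -- final numeric estimate
    have hT1 : N^2/(((A.erase 0).card:ℝ) * d1A)
        = N * ((2:ℝ)^(K+1)/((A.erase 0).card:ℝ)) := by
      rw [hd1Adef]
      exact IP_alg1 (ne_of_gt hsApos) (by positivity) (ne_of_gt hNpos)
    have hT2 : N^2/((Cs.card:ℝ) * d1B) = N * ((2:ℝ)^n/((2:ℝ)^K * (B.card:ℝ))) := by
      rw [hd1Bdef, hCscard]
      exact IP_alg2 (ne_of_gt hBpos) (by positivity) (by positivity) (ne_of_gt hNpos)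
    have hb1 : (2:ℝ)^(K+1)/((A.erase 0).card:ℝ) ≤ (2:ℝ)^((2:ℝ) - ε*n) := by
      have hnum : ((2:ℝ)^(K+1) : ℝ) = (2:ℝ)^(((K:ℝ)+1)) := by
        rw [← Real.rpow_natCast 2 (K+1)]
        push_cast
        ring_nf
      calc (2:ℝ)^(K+1)/((A.erase 0).card:ℝ)
          ≤ (2:ℝ)^(K+1)/(2:ℝ)^((n:ℝ) - h - 1) := by
            apply div_le_div_of_nonneg_left _ (Gpos _) hsA2
            positivity
        _ = (2:ℝ)^(((K:ℝ)+1) - ((n:ℝ) - h - 1)) := by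
            rw [hnum, ← Real.rpow_sub two_pos]
        _ ≤ (2:ℝ)^((2:ℝ) - ε*n) := Gmono (by linarith)
    have hb2 : (2:ℝ)^n/((2:ℝ)^K * (B.card:ℝ)) ≤ (2:ℝ)^((2:ℝ) - ε*n) := by
      have hnum1 : ((2:ℝ)^n : ℝ) = (2:ℝ)^((n:ℝ)) := by
        rw [← Real.rpow_natCast 2 n]
      have hnum2 : ((2:ℝ)^K : ℝ) = (2:ℝ)^((K:ℝ)) := by
        rw [← Real.rpow_natCast 2 K]
      calc (2:ℝ)^n/((2:ℝ)^K * (B.card:ℝ))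
          ≤ (2:ℝ)^n/((2:ℝ)^K * (2:ℝ)^((n:ℝ) - h)) := by
            apply div_le_div_of_nonneg_left _ (by positivity) _
            · positivity
            · exact mul_le_mul_of_nonneg_left hB' (by positivity)
        _ = (2:ℝ)^((n:ℝ) - ((K:ℝ) + ((n:ℝ) - h))) := by
            rw [hnum1, hnum2, ← Real.rpow_add two_pos, ← Real.rpow_sub two_pos]
        _ ≤ (2:ℝ)^((2:ℝ) - ε*n) := Gmono (by linarith)
    have hexp : (2:ℝ)^((2:ℝ) - ε*n) ≤ (2:ℝ)^(-(ε*(n:ℝ)/4)) :=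
      Gmono (by linarith)
    have hZcard : (((zA ∪ zB).card : ℕ):ℝ)
        ≤ (2 * (2:ℝ)^(-(ε*(n:ℝ)/4))) * (Fintype.card (Fin (K+1) → Fin n → ZMod 2) : ℝ) := by
      rw [hcardΩ]
      calc ((zA ∪ zB).card : ℝ)
          ≤ (zA.card:ℝ) + (zB.card:ℝ) := by exact_mod_cast Finset.card_union_le _ _
        _ ≤ N^2/(((A.erase 0).card:ℝ) * d1A) + N^2/((Cs.card:ℝ) * d1B) :=
            add_le_add hAbound hBbound
        _ = N * ((2:ℝ)^(K+1)/((A.erase 0).card:ℝ))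
            + N * ((2:ℝ)^n/((2:ℝ)^K * (B.card:ℝ))) := by rw [hT1, hT2]
        _ ≤ N * ((2:ℝ)^((2:ℝ) - ε*n)) + N * ((2:ℝ)^((2:ℝ) - ε*n)) := by
            apply add_le_add
            · exact mul_le_mul_of_nonneg_left hb1 (le_of_lt hNpos)
            · exact mul_le_mul_of_nonneg_left hb2 (le_of_lt hNpos)
        _ ≤ N * ((2:ℝ)^(-(ε*(n:ℝ)/4))) + N * ((2:ℝ)^(-(ε*(n:ℝ)/4))) := by
            apply add_le_add
            · exact mul_le_mul_of_nonneg_left hexp (le_of_lt hNpos)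
            · exact mul_le_mul_of_nonneg_left hexp (le_of_lt hNpos)
        _ = (2 * (2:ℝ)^(-(ε*(n:ℝ)/4))) * N := by ring
    exact pushDist_hit_ge f _ (zA ∪ zB) hmem _ hZcard
end
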